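/- arXiv:2210.00666 — 4 statements merged into one kernel-verified Lean document; each statement's English description precedes it below -/
import Mathlib

section
/- Let F be a graph with an (r+1)-coloring having a color class of size s and another color class of size t. Let G be a graph whose vertex set is partitioned into parts A_1, ..., A_r, each of size at least |V(F)|^2, such that every vertex of A_i is adjacent to all but at most |A_j|/|V(F)| vertices of A_j for every j ≠ i. If G contains a copy of K_{s,t} with both sides inside some single part A_i, then G contains a copy of F. -/
/-!
The two colour classes of sizes `s` and `t` go into the part `A_i` along the given `K_{s,t}`,
and the remaining `r - 1` colour classes are sent injectively to the other `r - 1` parts, so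
adjacent vertices of `F` outside those two classes always land in different parts. The other
vertices are then embedded greedily: a vertex destined for `A_j` must avoid fewer than `|V(F)|`
used vertices and, for each of its fewer than `|V(F)|` embedded neighbours, at most
`|A_j| / |V(F)|` non-neighbours; as `|A_j| ≥ |V(F)|²`, this rules out fewer than `|A_j|` vertices.
-/
open SimpleGraph Finset

/-- `G` contains a copy of `F`. -/
def Graph.Contains {α β : Type*} (F : SimpleGraph α) (G : SimpleGraph β) : Prop :=
  ∃ f : α ↪ β, ∀ ⦃a b : α⦄, F.Adj a b → G.Adj (f a) (f b)

/-- The number of subgraphs of `G` isomorphic to `H`, i.e. `N(H, G)`. -/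
noncomputable def Graph.copyCount {α β : Type*} (H : SimpleGraph α) (G : SimpleGraph β) : ℕ :=
  Set.ncard {G' : G.Subgraph | Nonempty (H ≃g G'.coe)}

/-- The join `G + G'` of two graphs. -/
def Graph.join {α β : Type*} (G : SimpleGraph α) (H : SimpleGraph β) :
    SimpleGraph (α ⊕ β) where
  Adj x y :=
    match x, y with
    | Sum.inl a, Sum.inl b => G.Adj a b
    | Sum.inr a, Sum.inr b => H.Adj a b
    | Sum.inl _, Sum.inr _ => True
    | Sum.inr _, Sum.inl _ => True
  symm := ⟨by rintro (a | a) (b | b) h <;> simp_all <;> exact h.symm⟩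
  loopless := ⟨by rintro (a | a) h <;> simp_all⟩

/-- `s` is the minimum size of a color class over proper `(r+1)`-colorings of `F` (σ(F) = s). -/
def Graph.IsSigma {α : Type*} (F : SimpleGraph α) (r s : ℕ) : Prop :=
  IsLeast {k : ℕ | ∃ (C : F.Coloring (Fin (r + 1))) (i : Fin (r + 1)),
    k = {v | C v = i}.ncard} s

namespace Graph

variable {γ V ι : Type*} {F : SimpleGraph γ} {G : SimpleGraph V}

def IsPartialCopy (F : SimpleGraph γ) (G : SimpleGraph V) (S : Set γ) (f : γ → V) : Prop :=
  S.InjOn f ∧ ∀ ⦃a⦄, a ∈ S → ∀ ⦃b⦄, b ∈ S → F.Adj a b → G.Adj (f a) (f b)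

theorem IsPartialCopy.contains {f : γ → V} (hf : IsPartialCopy F G Set.univ f) :
    Contains F G :=
  ⟨⟨f, Set.injOn_univ.1 hf.1⟩, fun _ _ h => hf.2 trivial trivial h⟩

theorem IsPartialCopy.insert_update [DecidableEq γ] {S : Set γ} {f : γ → V} {u : γ} {w : V}
    (hf : IsPartialCopy F G S f) (hu : u ∉ S) (hw : w ∉ f '' S)
    (hadj : ∀ x ∈ S, F.Adj u x → G.Adj w (f x)) :
    IsPartialCopy F G (insert u S) (Function.update f u w) := by
  have update_of_mem : ∀ x ∈ S, Function.update f u w x = f x :=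
    fun x hx => Function.update_of_ne (ne_of_mem_of_not_mem hx hu) _ _
  constructor
  · rw [Set.injOn_insert hu, Function.update_self]
    refine ⟨hf.1.congr fun x hx => (update_of_mem x hx).symm, ?_⟩
    rwa [Set.image_congr update_of_mem]
  · rintro a (rfl | ha) b (rfl | hb) hab
    · exact absurd hab F.irrefl
    · rw [Function.update_self, update_of_mem b hb]
      exact hadj b hb hab
    · rw [Function.update_self, update_of_mem a ha]
      exact (hadj a ha hab.symm).symm
    · rw [update_of_mem a ha, update_of_mem b hb]
      exact hf.2 ha hb hab

theorem _root_.SimpleGraph.exists_mem_notMem_forall_adj [DecidableEq V] (G : SimpleGraph V)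
    [DecidableRel G.Adj] {A T N : Finset V} {d : ℝ}
    (hN : ∀ y ∈ N, (#{w ∈ A | ¬G.Adj y w} : ℝ) ≤ d) (hlt : #T + #N * d < #A) :
    ∃ w ∈ A, w ∉ T ∧ ∀ y ∈ N, G.Adj y w := by
  set bad := T ∪ N.biUnion fun y => {w ∈ A | ¬G.Adj y w}
  have hbad : (#bad : ℝ) < #A := calc
    (#bad : ℝ) ≤ #T + ∑ y ∈ N, (#{w ∈ A | ¬G.Adj y w} : ℝ) := by
      exact_mod_cast (card_union_le _ _).trans (Nat.add_le_add_left card_biUnion_le _)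
    _ ≤ #T + #N * d := by
      gcongr
      simpa using sum_le_card_nsmul N _ d hN
    _ < #A := hlt
  obtain ⟨w, hwA, hw⟩ := exists_mem_notMem_of_card_lt_card (by exact_mod_cast hbad)
  simp only [bad, mem_union, mem_biUnion, mem_filter, not_or, not_exists, not_and, not_not] at hw
  exact ⟨w, hwA, hw.1, fun y hy => hw.2 y hy hwA⟩

theorem exists_extension_vertex_of_dense [Fintype γ] [Fintype V] {P : V → ι} {π : γ → ι}
    {S : Set γ} {f : γ → V} {u : γ} (hu : u ∉ S) (hfP : ∀ x ∈ S, P (f x) = π x)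
    (hπ : ∀ x, F.Adj u x → π x ≠ π u)
    (hsize : Fintype.card γ ^ 2 ≤ {v | P v = π u}.ncard)
    (hdense : ∀ i j, i ≠ j → ∀ v, P v = i →
      ({w | P w = j ∧ ¬ G.Adj v w}.ncard : ℝ) ≤ ({w | P w = j}.ncard : ℝ) / Fintype.card γ) :
    ∃ w, P w = π u ∧ w ∉ f '' S ∧ ∀ x ∈ S, F.Adj u x → G.Adj w (f x) := by
  classical
  set n := Fintype.card γ
  set A : Finset V := {v | P v = π u}
  set N := {x ∈ S.toFinset | F.Adj u x}.image f
  have hA : {v | P v = π u}.ncard = #A := by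
    rw [Set.ncard_eq_toFinset_card', Set.toFinset_ofPred]
  have hN : ∀ y ∈ N, (#{w ∈ A | ¬G.Adj y w} : ℝ) ≤ #A / n := by
    simp only [N, mem_image, mem_filter, Set.mem_toFinset]
    rintro _ ⟨x, ⟨hxS, hux⟩, rfl⟩
    have := hdense _ _ (hπ x hux) (f x) (hfP x hxS)
    rwa [hA, Set.ncard_eq_toFinset_card', Set.toFinset_ofPred, ← filter_filter] at this
  have hS : #S.toFinset + 1 ≤ n := card_lt_univ_of_notMem (by simpa using hu)
  have hlt : (#(S.toFinset.image f) : ℝ) + #N * (#A / n) < #A := by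
    have hT : #(S.toFinset.image f) ≤ #S.toFinset := card_image_le
    have hN : #N ≤ #S.toFinset := card_image_le.trans (card_filter_le _ _)
    have hn : (0 : ℝ) < n := by exact_mod_cast (Nat.succ_pos _).trans_le hS
    have hq : (n : ℝ) ≤ #A / n := by
      rw [le_div_iff₀ hn]
      exact_mod_cast (sq n).symm.le.trans (hsize.trans hA.le)
    have hAq : (#A : ℝ) = n * (#A / n) := by field_simp
    have hS' : (#S.toFinset : ℝ) + 1 ≤ n := by exact_mod_cast hS
    have hT' : (#(S.toFinset.image f) : ℝ) ≤ #S.toFinset := by exact_mod_cast hT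
    have hN' : (#N : ℝ) ≤ #S.toFinset := by exact_mod_cast hN
    nlinarith
  obtain ⟨w, hwA, hwT, hwN⟩ := G.exists_mem_notMem_forall_adj hN hlt
  refine ⟨w, (mem_filter.1 hwA).2, by simpa using hwT, fun x hx hux => (hwN _ ?_).symm⟩
  exact mem_image_of_mem f (mem_filter.2 ⟨Set.mem_toFinset.2 hx, hux⟩)

theorem IsPartialCopy.contains_of_dense [Fintype γ] [Fintype V] {P : V → ι} {π : γ → ι}
    {B : Set γ} {f₀ : γ → V} (h₀ : IsPartialCopy F G B f₀) (hP₀ : ∀ x ∈ B, P (f₀ x) = π x)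
    (hπ : ∀ u ∉ B, ∀ x, F.Adj u x → π x ≠ π u)
    (hsize : ∀ u ∉ B, Fintype.card γ ^ 2 ≤ {v | P v = π u}.ncard)
    (hdense : ∀ i j, i ≠ j → ∀ v, P v = i →
      ({w | P w = j ∧ ¬ G.Adj v w}.ncard : ℝ) ≤ ({w | P w = j}.ncard : ℝ) / Fintype.card γ) :
    Contains F G := by
  classical
  suffices ∀ D : Finset γ, ∃ f, IsPartialCopy F G (B ∪ D) f ∧ ∀ x ∈ B ∪ D, P (f x) = π x by
    obtain ⟨f, hf, -⟩ := this univ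
    rw [coe_univ, Set.union_univ] at hf
    exact hf.contains
  intro D
  induction D using Finset.induction_on with
  | empty => exact ⟨f₀, by simpa using h₀, by simpa using hP₀⟩
  | @insert u D _ ih =>
    obtain ⟨f, hf, hfP⟩ := ih
    rw [coe_insert, Set.union_insert]
    by_cases hu : u ∈ B ∪ D
    · rw [Set.insert_eq_of_mem hu]
      exact ⟨f, hf, hfP⟩
    have huB : u ∉ B := fun h => hu (Or.inl h)
    obtain ⟨w, hwP, hwS, hwadj⟩ :=
      exists_extension_vertex_of_dense hu hfP (hπ u huB) (hsize u huB) hdense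
    refine ⟨Function.update f u w, hf.insert_update hu hwS hwadj, ?_⟩
    rintro x (rfl | hx)
    · rwa [Function.update_self]
    · rw [Function.update_of_ne (ne_of_mem_of_not_mem hx hu)]
      exact hfP x hx

theorem exists_isPartialCopy_union [Finite γ] [Nonempty V] {X Y : Set γ} {s t : ℕ}
    (hX : F.IsIndepSet X) (hY : F.IsIndepSet Y) (hXY : Disjoint X Y)
    (hXs : X.ncard = s) (hYt : Y.ncard = t) {A : Set V}
    (hK : Contains (completeBipartiteGraph (Fin s) (Fin t)) (G.induce A)) :
    ∃ f, IsPartialCopy F G (X ∪ Y) f ∧ ∀ v ∈ X ∪ Y, f v ∈ A := by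
  classical
  obtain ⟨g, hg⟩ := hK
  let eX : X ≃ Fin s := (Finite.equivFin X).trans (finCongr hXs)
  let eY : Y ≃ Fin t := (Finite.equivFin Y).trans (finCongr hYt)
  let φ : ↥(X ∪ Y) → Fin s ⊕ Fin t := fun v => Sum.map eX eY (Equiv.Set.union hXY v)
  have hφ : Function.Injective φ :=
    (Sum.map_injective.2 ⟨eX.injective, eY.injective⟩).comp (Equiv.Set.union hXY).injective
  have hφadj : ∀ (a b : ↥(X ∪ Y)), (a : γ) ∈ X → (b : γ) ∈ Y →
      (completeBipartiteGraph (Fin s) (Fin t)).Adj (φ a) (φ b) := by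
    intro a b ha hb
    simp [φ, Equiv.Set.union_apply_left hXY ha, Equiv.Set.union_apply_right hXY hb]
  refine ⟨fun v => if h : v ∈ X ∪ Y then (g (φ ⟨v, h⟩) : V) else Classical.arbitrary V,
    ⟨fun a ha b hb hab => ?_, fun a ha b hb hab => ?_⟩, fun v hv => by simp [hv]⟩
  · simp only [dif_pos ha, dif_pos hb] at hab
    exact congrArg Subtype.val (hφ (g.injective (Subtype.ext hab)))
  · simp only [dif_pos ha, dif_pos hb]
    apply hg
    have hne := F.ne_of_adj hab
    rcases ha with haX | haY
    · exact hφadj ⟨a, _⟩ ⟨b, _⟩ haX (hb.resolve_left fun hbX => hX haX hbX hne hab)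
    · exact (hφadj ⟨b, _⟩ ⟨a, _⟩ (hb.resolve_right fun hbY => hY haY hbY hne hab) haY).symm

theorem exists_map_merging_pair {α β : Type*} [Fintype α] [Fintype β]
    (h : Fintype.card α = Fintype.card β + 1) {a₁ a₂ : α} (ha : a₁ ≠ a₂) (b : β) :
    ∃ π : α → β, π a₁ = b ∧ π a₂ = b ∧ ∀ x y, x ≠ y → π x = π y → y = a₁ ∨ y = a₂ := by
  classical
  have e₀ : {x : α | x ≠ a₂} ≃ β := Fintype.equivOfCardEq (by rw [Set.card_ne_eq, h]; rfl)
  let e := e₀.trans (Equiv.swap (e₀ ⟨a₁, ha⟩) b)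
  refine ⟨fun x => e ⟨if x = a₂ then a₁ else x, by split_ifs <;> assumption⟩,
    by simp [e, ha], by simp [e], fun x y hxy hπ => ?_⟩
  have : (if x = a₂ then a₁ else x) = if y = a₂ then a₁ else y :=
    congrArg Subtype.val (e.injective hπ)
  split_ifs at this <;> grind

end Graph

/-- if `F` has an `(r+1)`-coloring with classes of sizes `s` and `t`, `G` is
partitioned into `r` parts, each large, with almost-complete bipartite graphs between parts,
and some part contains a `K_{s,t}`, then `G` contains `F`. -/
theorem stmt_1 {γ V : Type*} [Fintype γ] [Fintype V] (F : SimpleGraph γ) (r s t : ℕ)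
    (C : F.Coloring (Fin (r + 1))) (c₁ c₂ : Fin (r + 1)) (hc : c₁ ≠ c₂)
    (hs : {v | C v = c₁}.ncard = s) (ht : {v | C v = c₂}.ncard = t)
    (G : SimpleGraph V) (P : V → Fin r)
    (hsize : ∀ i, (Fintype.card γ) ^ 2 ≤ {v | P v = i}.ncard)
    (hadj : ∀ i j, i ≠ j → ∀ v, P v = i →
      ({u | P u = j ∧ ¬ G.Adj v u}.ncard : ℝ) ≤ ({u | P u = j}.ncard : ℝ) / (Fintype.card γ))
    (i : Fin r)
    (hK : Graph.Contains (completeBipartiteGraph (Fin s) (Fin t))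
      (G.induce {v | P v = i})) :
    Graph.Contains F G := by
  rcases isEmpty_or_nonempty γ with hγ | hγ
  · exact ⟨Function.Embedding.ofIsEmpty, fun a => isEmptyElim a⟩
  have : Nonempty V := by
    obtain ⟨v, -⟩ := Set.nonempty_of_ncard_ne_zero
      ((pow_pos Fintype.card_pos 2).trans_le (hsize i)).ne'
    exact ⟨v⟩
  obtain ⟨π, hπ₁, hπ₂, hπ⟩ := Graph.exists_map_merging_pair (by simp) hc i
  obtain ⟨f₀, hf₀, hf₀A⟩ := Graph.exists_isPartialCopy_union (C.isIndepSet_colorClass c₁)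
    (C.isIndepSet_colorClass c₂) (Set.disjoint_left.2 fun _ h₁ h₂ => hc (h₁.symm.trans h₂))
    hs ht hK
  refine hf₀.contains_of_dense (π := π ∘ C) (fun x hx => ?_)
    (fun u hu x hux hπx => hu (hπ _ _ (C.valid hux).symm hπx)) (fun u _ => hsize _) hadj
  rw [hf₀A x hx, Function.comp_apply]
  rcases hx with h | h
  · rw [show C x = c₁ from h, hπ₁]
  · rw [show C x = c₂ from h, hπ₂]
end

section
/- Let p < s ≤ t, s < q, and let G be a K_{s,t}-free graph on n vertices, with n sufficiently large. Fix ε > 0 and let U be the set of vertices of G with degree at most εn. Then the number of copies of K_{p,q} in G whose side of size p contains at least one vertex of U is at most ε·n^{p+q-1}. -/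
open SimpleGraph Finset

/-!
Every counted copy has a vertex `u` of degree at most `εn` on its `p`-side, its `q`-side inside
the neighbourhood of `u`, and its other `p - 1` vertices among the common neighbours of the
`q`-side, of which there are fewer than `t` because `q ≥ s`. Hence the count is at most
`C(t-1, p-1) · ∑_{u ∈ U} C(d(u), q)`. For `p ≥ 2` the crude bound
`∑_u C(d(u), q) ≤ t n^q` suffices, since `n^{p+q-1} ≥ n^{q+1}`.

For `p = 1` put `δ = ε / 2t`. Double counting `s`-sets with a common neighbour gives
`∑_u C(d(u), s) ≤ (t-1) C(n, s)`, and with `C(d, q) ≤ C(d, s) d^{q-s}` the vertices of degree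
at most `δn` contribute at most `(ε/2) n^q`. The same double counting bounds the degree sum of
any `m` vertices by `(s-1)n + C(m, s)(t-1)`, so fewer than `s/δ` vertices have degree above `δn`
and their degrees sum to at most `sn`; as `C(d, q) ≤ εn^{q-1} d / q!` when `d ≤ εn`, these
vertices contribute at most `(ε/2) n^q` as well.
-/

theorem Graph.contains_iff_isContained {α β : Type*} {F : SimpleGraph α} {G : SimpleGraph β} :
    Graph.Contains F G ↔ F ⊑ G :=
  isContained_iff_exists_le_comap.symm

theorem Nat.le_sub_one_add_choose {s : ℕ} (hs : 1 ≤ s) (c : ℕ) :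
    c ≤ s - 1 + c.choose s := by
  rcases lt_or_ge c s with h | h
  · omega
  obtain ⟨k, rfl⟩ := Nat.exists_eq_add_of_le h
  have : k + 1 ≤ (s + k).choose s :=
    calc k + 1 = (k + 1).choose k := (Nat.choose_succ_self_right k).symm
      _ ≤ (s + k).choose k := Nat.choose_le_choose k (by omega)
      _ = (s + k).choose s := Nat.choose_symm_add.symm
  omega

theorem Nat.choose_le_choose_mul_pow {d s q : ℕ} (hsq : s ≤ q) :
    d.choose q ≤ d.choose s * d ^ (q - s) :=
  calc d.choose q ≤ d.choose q * q.choose s := Nat.le_mul_of_pos_right _ (Nat.choose_pos hsq)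
    _ = d.choose s * (d - s).choose (q - s) := Nat.choose_mul hsq
    _ ≤ d.choose s * d ^ (q - s) := by
      gcongr
      exact (Nat.choose_le_pow _ _).trans (Nat.pow_le_pow_left (Nat.sub_le _ _) _)

open Nat in
theorem Nat.cast_choose_le_of_le_mul {d n q : ℕ} {ε : ℝ} (hq : 2 ≤ q)
    (hdε : d ≤ ε * n) (hdn : d ≤ n) : (d.choose q : ℝ) ≤ ε * n ^ (q - 1) / q ! * d := by
  have hpow : (d : ℝ) ^ q ≤ n ^ (q - 2) * (ε * n) * d := by
    calc (d : ℝ) ^ q = d ^ (q - 2) * d * d := by rw [← pow_succ, ← pow_succ]; congr 1; omega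
      _ ≤ n ^ (q - 2) * (ε * n) * d := by gcongr
  calc (d.choose q : ℝ) ≤ d ^ q / q ! := Nat.choose_le_pow_div q d
    _ ≤ n ^ (q - 2) * (ε * n) * d / q ! := by gcongr
    _ = ε * n ^ (q - 1) / q ! * d := by
      rw [show q - 1 = q - 2 + 1 by omega, pow_succ]
      ring

namespace SimpleGraph

variable {V : Type*} {G : SimpleGraph V} {s t : ℕ}

variable (G) in
def bicliquesMeeting (p q : ℕ) (U : Finset V) : Set (Finset V × Finset V) :=
  {ST | #ST.1 = p ∧ #ST.2 = q ∧ (∀ a ∈ ST.1, ∀ b ∈ ST.2, G.Adj a b) ∧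
    ∃ u ∈ ST.1, u ∈ U}

theorem bicliquesMeeting_zero (q : ℕ) (U : Finset V) : G.bicliquesMeeting 0 q U = ∅ :=
  Set.eq_empty_of_forall_notMem fun _ ⟨hS, _, _, u, hu, _⟩ ↦ (card_pos.mpr ⟨u, hu⟩).ne' hS

variable [Fintype V] [DecidableRel G.Adj]

theorem ncard_neighborSet_eq_degree (v : V) : (G.neighborSet v).ncard = G.degree v := by
  rw [degree, neighborFinset_def, Set.ncard_eq_toFinset_card']

variable (G) in
def commonNeighborFinset (A : Finset V) : Finset V := {x | ∀ a ∈ A, G.Adj a x}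

@[simp]
theorem mem_commonNeighborFinset {A : Finset V} {x : V} :
    x ∈ G.commonNeighborFinset A ↔ ∀ a ∈ A, G.Adj a x := by
  simp [commonNeighborFinset]

theorem card_commonNeighborFinset_lt (hG : (completeBipartiteGraph (Fin s) (Fin t)).Free G)
    {A : Finset V} (hA : s ≤ #A) : #(G.commonNeighborFinset A) < t := by
  by_contra! h
  obtain ⟨B, hB, hBcard⟩ := exists_subset_card_eq h
  obtain ⟨A', hA', hA'card⟩ := exists_subset_card_eq hA
  refine hG (completeBipartiteGraph_isContained_iff.mpr ⟨A', B, by simpa, by simpa, ?_⟩)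
  intro a ha b hb
  exact mem_commonNeighborFinset.mp (hB hb) a (hA' ha)

variable [DecidableEq V]

theorem sum_choose_card_neighborFinset_inter_le
    (hG : (completeBipartiteGraph (Fin s) (Fin t)).Free G) (W : Finset V) :
    ∑ x, (#(G.neighborFinset x ∩ W)).choose s ≤ (#W).choose s * (t - 1) := by
  have hAbove (x : V) :
      (W.powersetCard s).bipartiteAbove (fun y A ↦ ∀ a ∈ A, G.Adj a y) x =
      (G.neighborFinset x ∩ W).powersetCard s := by
    ext A
    simp only [mem_bipartiteAbove, mem_powersetCard, subset_iff, mem_inter,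
      mem_neighborFinset, G.adj_comm x]
    grind
  calc ∑ x, (#(G.neighborFinset x ∩ W)).choose s
      = ∑ A ∈ W.powersetCard s, #(G.commonNeighborFinset A) := by
        simp_rw [← card_powersetCard, ← hAbove]
        convert sum_card_bipartiteAbove_eq_sum_card_bipartiteBelow _ using 3 with A
        ext x
        simp
    _ ≤ ∑ _A ∈ W.powersetCard s, (t - 1) := by
        refine sum_le_sum fun A hA ↦ Nat.le_sub_one_of_lt ?_
        exact card_commonNeighborFinset_lt hG (mem_powersetCard.mp hA).2.ge
    _ = (#W).choose s * (t - 1) := by rw [sum_const, card_powersetCard, smul_eq_mul]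

theorem sum_choose_degree_le (hG : (completeBipartiteGraph (Fin s) (Fin t)).Free G) :
    ∑ x, (G.degree x).choose s ≤ (Fintype.card V).choose s * (t - 1) := by
  simpa using sum_choose_card_neighborFinset_inter_le hG univ

theorem sum_degree_eq_sum_card_neighborFinset_inter (H : Finset V) :
    ∑ u ∈ H, G.degree u = ∑ x, #(G.neighborFinset x ∩ H) := by
  have := sum_card_bipartiteAbove_eq_sum_card_bipartiteBelow (s := H) (t := univ) G.Adj
  convert this using 2 with u - x -
  · rw [← card_neighborFinset_eq_degree, neighborFinset_eq_filter]
    rfl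
  · congr 1
    ext y
    simp [G.adj_comm x, and_comm]

theorem sum_degree_le (hG : (completeBipartiteGraph (Fin s) (Fin t)).Free G) (hs : 1 ≤ s)
    (H : Finset V) :
    ∑ u ∈ H, G.degree u ≤ (s - 1) * Fintype.card V + (#H).choose s * (t - 1) :=
  calc ∑ u ∈ H, G.degree u = ∑ x, #(G.neighborFinset x ∩ H) :=
        sum_degree_eq_sum_card_neighborFinset_inter H
    _ ≤ ∑ x, (s - 1 + (#(G.neighborFinset x ∩ H)).choose s) :=
        sum_le_sum fun x _ ↦ Nat.le_sub_one_add_choose hs _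
    _ = (s - 1) * Fintype.card V + ∑ x, (#(G.neighborFinset x ∩ H)).choose s := by
        rw [sum_add_distrib, sum_const, card_univ, smul_eq_mul, mul_comm]
    _ ≤ (s - 1) * Fintype.card V + (#H).choose s * (t - 1) := by
        gcongr
        exact sum_choose_card_neighborFinset_inter_le hG H

theorem sum_degree_le_of_forall_lt_degree (hG : (completeBipartiteGraph (Fin s) (Fin t)).Free G)
    (hs : 1 ≤ s) {δ : ℝ} (hδ : 0 < δ)
    (hV : (⌈s / δ⌉₊).choose s * (t - 1) ≤ Fintype.card V)
    {H : Finset V} (hH : ∀ u ∈ H, δ * Fintype.card V < G.degree u) :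
    ∑ u ∈ H, G.degree u ≤ s * Fintype.card V := by
  set m := ⌈s / δ⌉₊
  have hsn : (s - 1) * Fintype.card V + Fintype.card V = s * Fintype.card V := by
    rw [← Nat.succ_mul, Nat.succ_eq_add_one, Nat.sub_add_cancel hs]
  have hHm : #H < m := by
    by_contra! hle
    obtain ⟨H', hH', hcard⟩ := exists_subset_card_eq hle
    have hne : H'.Nonempty := by
      rw [← card_pos, hcard]
      exact Nat.ceil_pos.mpr (by positivity)
    have hlower : m * (δ * Fintype.card V) < ∑ u ∈ H', (G.degree u : ℝ) := by
      simpa [hcard] using sum_lt_sum_of_nonempty hne fun u hu ↦ hH u (hH' hu)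
    have hupper : ∑ u ∈ H', G.degree u ≤ s * Fintype.card V := by
      have := sum_degree_le hG hs H'
      rw [hcard] at this
      omega
    have hsm : (s : ℝ) ≤ m * δ := (div_le_iff₀ hδ).mp (Nat.le_ceil _)
    have : (s : ℝ) * Fintype.card V ≤ m * (δ * Fintype.card V) := by
      rw [← mul_assoc]
      gcongr
    have : (∑ u ∈ H', G.degree u : ℝ) ≤ s * Fintype.card V := by exact_mod_cast hupper
    linarith
  have := sum_degree_le hG hs H
  have : (#H).choose s * (t - 1) ≤ m.choose s * (t - 1) := by
    gcongr
  omega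

theorem sum_choose_degree_le_of_forall_degree_le
    (hG : (completeBipartiteGraph (Fin s) (Fin t)).Free G) {q : ℕ} (hsq : s < q) {δ : ℝ}
    (hδ : 0 ≤ δ) (L : Finset V) (hL : ∀ u ∈ L, G.degree u ≤ δ * Fintype.card V) :
    ∑ u ∈ L, ((G.degree u).choose q : ℝ) ≤ t * δ * Fintype.card V ^ q := by
  set n := Fintype.card V
  have hpow (u : V) (hu : u ∈ L) : (G.degree u : ℝ) ^ (q - s) ≤ δ * n ^ (q - s) := by
    have hdn : (G.degree u : ℝ) ≤ n := by exact_mod_cast (G.degree_lt_card_verts u).le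
    calc (G.degree u : ℝ) ^ (q - s) = G.degree u * G.degree u ^ (q - s - 1) := by
          rw [← pow_succ']; congr 1; omega
      _ ≤ (δ * n) * n ^ (q - s - 1) := by gcongr; exact hL u hu
      _ = δ * n ^ (q - s) := by
          rw [mul_assoc, ← pow_succ']; congr 2; omega
  calc ∑ u ∈ L, ((G.degree u).choose q : ℝ)
      ≤ ∑ u ∈ L, ((G.degree u).choose s : ℝ) * (δ * n ^ (q - s)) := by
        refine sum_le_sum fun u hu ↦ ?_
        calc ((G.degree u).choose q : ℝ)
            ≤ ((G.degree u).choose s * G.degree u ^ (q - s) : ℕ) := by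
              exact_mod_cast Nat.choose_le_choose_mul_pow hsq.le
          _ ≤ ((G.degree u).choose s : ℝ) * (δ * n ^ (q - s)) := by
              push_cast
              gcongr
              exact hpow u hu
    _ ≤ ∑ u, ((G.degree u).choose s : ℝ) * (δ * n ^ (q - s)) :=
        sum_le_sum_of_subset_of_nonneg (subset_univ _) fun _ _ _ ↦ by positivity
    _ = ((∑ u, (G.degree u).choose s : ℕ) : ℝ) * (δ * n ^ (q - s)) := by
        rw [Nat.cast_sum, sum_mul]
    _ ≤ ((n.choose s * (t - 1) : ℕ) : ℝ) * (δ * n ^ (q - s)) := by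
        gcongr
        exact sum_choose_degree_le hG
    _ ≤ (n ^ s * t : ℝ) * (δ * n ^ (q - s)) := by
        push_cast
        gcongr
        · exact_mod_cast Nat.choose_le_pow n s
        · exact_mod_cast Nat.sub_le t 1
    _ = t * δ * n ^ q := by
        rw [show q = s + (q - s) by omega, pow_add, Nat.add_sub_cancel_left]
        ring

open Nat in
theorem sum_choose_degree_le_of_forall_lt_degree_le
    (hG : (completeBipartiteGraph (Fin s) (Fin t)).Free G) (hs : 1 ≤ s) {q : ℕ} (hsq : s < q)
    {δ ε : ℝ} (hδ : 0 < δ) (hε : 0 ≤ ε)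
    (hV : (⌈s / δ⌉₊).choose s * (t - 1) ≤ Fintype.card V)
    {H : Finset V}
    (hH : ∀ u ∈ H, δ * Fintype.card V < G.degree u ∧ G.degree u ≤ ε * Fintype.card V) :
    ∑ u ∈ H, ((G.degree u).choose q : ℝ) ≤ ε / 2 * Fintype.card V ^ q := by
  set n := Fintype.card V
  have hsum : (∑ u ∈ H, G.degree u : ℝ) ≤ s * n := by
    exact_mod_cast sum_degree_le_of_forall_lt_degree hG hs hδ hV fun u hu ↦ (hH u hu).1
  have hfact : (2 * s : ℝ) ≤ q ! := by
    obtain ⟨k, rfl⟩ := Nat.exists_eq_add_of_lt hsq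
    have := Nat.self_le_factorial (s + k)
    rw [Nat.factorial_succ]
    exact_mod_cast (by nlinarith : 2 * s ≤ (s + k + 1) * (s + k)!)
  calc ∑ u ∈ H, ((G.degree u).choose q : ℝ)
      ≤ ∑ u ∈ H, ε * n ^ (q - 1) / q ! * G.degree u :=
        sum_le_sum fun u hu ↦ Nat.cast_choose_le_of_le_mul (by omega) (hH u hu).2
          (G.degree_lt_card_verts u).le
    _ = ε * n ^ (q - 1) / q ! * ∑ u ∈ H, (G.degree u : ℝ) := (mul_sum ..).symm
    _ ≤ ε * n ^ (q - 1) / q ! * (s * n) := by gcongr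
    _ = ε * s / q ! * n ^ q := by
        rw [show q = q - 1 + 1 by omega, pow_succ, Nat.add_sub_cancel]
        ring
    _ ≤ ε / 2 * n ^ q := by
        have : ε * s / q ! ≤ ε / 2 := by
          rw [div_le_div_iff₀ (by positivity) (by positivity)]
          nlinarith
        gcongr

theorem sum_choose_degree_le_of_degree_le_mul
    (hG : (completeBipartiteGraph (Fin s) (Fin t)).Free G) (hs : 1 ≤ s) (ht : 0 < t) {q : ℕ}
    (hsq : s < q) {ε : ℝ} (hε : 0 < ε)
    (hV : (⌈2 * s * t / ε⌉₊).choose s * (t - 1) ≤ Fintype.card V) :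
    ∑ u ∈ {u | (G.degree u : ℝ) ≤ ε * Fintype.card V}, ((G.degree u).choose q : ℝ) ≤
      ε * Fintype.card V ^ q := by
  set n := Fintype.card V with hn
  set U : Finset V := {u | (G.degree u : ℝ) ≤ ε * n}
  set δ := ε / (2 * t) with hδ_def
  have hδ : 0 < δ := by positivity
  have hlight :
      ∑ u ∈ U with G.degree u ≤ δ * n, ((G.degree u).choose q : ℝ) ≤ ε / 2 * n ^ q :=
    (sum_choose_degree_le_of_forall_degree_le hG hsq hδ.le _ fun u hu ↦
      (mem_filter.mp hu).2).trans_eq (by rw [hδ_def, hn]; field_simp)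
  have hheavy :
      ∑ u ∈ U with ¬ G.degree u ≤ δ * n, ((G.degree u).choose q : ℝ) ≤
        ε / 2 * n ^ q := by
    have hsδ : s / δ = 2 * s * t / ε := by rw [hδ_def]; field_simp
    refine sum_choose_degree_le_of_forall_lt_degree_le hG hs hsq hδ hε.le (by rwa [hsδ])
      fun u hu ↦ ?_
    obtain ⟨huU, hu⟩ := mem_filter.mp hu
    exact ⟨lt_of_not_ge hu, (mem_filter.mp huU).2⟩
  rw [← sum_filter_add_sum_filter_not U fun u ↦ G.degree u ≤ δ * n]
  linarith

theorem ncard_bicliquesMeeting_le (hG : (completeBipartiteGraph (Fin s) (Fin t)).Free G)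
    {p q : ℕ} (hsq : s ≤ q) (U : Finset V) :
    (G.bicliquesMeeting p q U).ncard ≤
      (t - 1).choose (p - 1) * ∑ u ∈ U, (G.degree u).choose q := by
  set F := (U.sigma fun u ↦ (G.neighborFinset u).powersetCard q).biUnion fun uT ↦
    ((G.commonNeighborFinset uT.2).powersetCard (p - 1)).image fun S ↦ (insert uT.1 S, uT.2)
  have hF : G.bicliquesMeeting p q U ⊆ F := by
    rintro ⟨S, T⟩ ⟨hS, hT, hST, u, huS, huU⟩
    simp only [F, coe_biUnion, coe_image, Set.mem_iUnion, Set.mem_image, mem_coe, mem_sigma,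
      mem_powersetCard]
    refine ⟨⟨u, T⟩, ⟨huU, fun b hb ↦ (mem_neighborFinset ..).mpr (hST u huS b hb), hT⟩,
      S.erase u, ⟨fun a ha ↦ ?_, by rw [card_erase_of_mem huS, hS]⟩,
      by rw [insert_erase huS]⟩
    exact mem_commonNeighborFinset.mpr fun b hb ↦ (hST a (mem_of_mem_erase ha) b hb).symm
  calc _ ≤ #F := (Set.ncard_le_ncard hF).trans_eq (Set.ncard_coe_finset F)
    _ ≤ ∑ _uT ∈ U.sigma fun u ↦ (G.neighborFinset u).powersetCard q,
          (t - 1).choose (p - 1) := by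
        refine card_biUnion_le.trans (sum_le_sum fun uT huT ↦ card_image_le.trans ?_)
        rw [card_powersetCard]
        refine Nat.choose_le_choose _ (Nat.le_sub_one_of_lt (card_commonNeighborFinset_lt hG ?_))
        rw [(mem_powersetCard.mp (mem_sigma.mp huT).2).2]
        exact hsq
    _ = (t - 1).choose (p - 1) * ∑ u ∈ U, (G.degree u).choose q := by
        simp [card_sigma, mul_comm]

theorem ncard_bicliquesMeeting_le_pow (hG : (completeBipartiteGraph (Fin s) (Fin t)).Free G)
    {p q : ℕ} (hp : 1 ≤ p) (hsq : s < q) (U : Finset V) :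
    ((G.bicliquesMeeting p q U).ncard : ℝ) ≤ t ^ p * Fintype.card V ^ q := by
  have hsum : ∑ u ∈ U, ((G.degree u).choose q : ℝ) ≤ t * Fintype.card V ^ q := by
    simpa using sum_choose_degree_le_of_forall_degree_le hG hsq zero_le_one U
      fun u _ ↦ by simpa using (G.degree_lt_card_verts u).le
  calc ((G.bicliquesMeeting p q U).ncard : ℝ)
      ≤ ((t - 1).choose (p - 1) : ℝ) * ∑ u ∈ U, ((G.degree u).choose q : ℝ) := by
        exact_mod_cast ncard_bicliquesMeeting_le hG hsq.le U
    _ ≤ t ^ (p - 1) * (t * Fintype.card V ^ q) := by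
        gcongr
        exact_mod_cast (Nat.choose_le_pow _ _).trans (Nat.pow_le_pow_left (Nat.sub_le t 1) _)
    _ = t ^ p * Fintype.card V ^ q := by rw [← mul_assoc, ← pow_succ, Nat.sub_add_cancel hp]

theorem ncard_bicliquesMeeting_one_le (hG : (completeBipartiteGraph (Fin s) (Fin t)).Free G)
    (hs : 1 ≤ s) (ht : 0 < t) {q : ℕ} (hsq : s < q) {ε : ℝ} (hε : 0 < ε)
    (hV : (⌈2 * s * t / ε⌉₊).choose s * (t - 1) ≤ Fintype.card V) :
    ((G.bicliquesMeeting 1 q {u | (G.degree u : ℝ) ≤ ε * Fintype.card V}).ncard : ℝ) ≤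
      ε * Fintype.card V ^ q := by
  refine le_trans ?_ (sum_choose_degree_le_of_degree_le_mul hG hs ht hsq hε hV)
  have := ncard_bicliquesMeeting_le hG hsq.le (p := 1)
    {u | (G.degree u : ℝ) ≤ ε * Fintype.card V}
  rw [Nat.sub_self, Nat.choose_zero_right, one_mul] at this
  exact_mod_cast this

end SimpleGraph

/-- in an `n`-vertex `K_{s,t}`-free graph (`p < s ≤ t`, `s < q`, `n` large),
the number of copies of `K_{p,q}` whose `p`-side meets the set of vertices of degree at
most `εn` is at most `ε n^{p+q-1}`. -/
theorem stmt_2 (p s t q : ℕ) (hps : p < s) (hst : s ≤ t) (hsq : s < q)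
    (ε : ℝ) (hε : 0 < ε) :
    ∃ n₀ : ℕ, ∀ n ≥ n₀, ∀ G : SimpleGraph (Fin n),
      ¬ Graph.Contains (completeBipartiteGraph (Fin s) (Fin t)) G →
      (({ST : Finset (Fin n) × Finset (Fin n) |
          ST.1.card = p ∧ ST.2.card = q ∧ Disjoint ST.1 ST.2 ∧
          (∀ a ∈ ST.1, ∀ b ∈ ST.2, G.Adj a b) ∧
          ∃ u ∈ ST.1, ((G.neighborSet u).ncard : ℝ) ≤ ε * n}.ncard : ℝ)) ≤
        ε * (n : ℝ) ^ (p + q - 1) := by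
  classical
  refine ⟨max ((⌈2 * s * t / ε⌉₊).choose s * (t - 1)) ⌈t ^ p / ε⌉₊,
    fun n hn G hG ↦ ?_⟩
  rw [Graph.contains_iff_isContained] at hG
  set U : Finset (Fin n) := {u | (G.degree u : ℝ) ≤ ε * n}
  have hsub : {ST : Finset (Fin n) × Finset (Fin n) | ST.1.card = p ∧ ST.2.card = q ∧
      Disjoint ST.1 ST.2 ∧ (∀ a ∈ ST.1, ∀ b ∈ ST.2, G.Adj a b) ∧
      ∃ u ∈ ST.1, ((G.neighborSet u).ncard : ℝ) ≤ ε * n} ⊆ G.bicliquesMeeting p q U := by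
    rintro ⟨S, T⟩ ⟨hS, hT, -, hST, u, huS, hu⟩
    exact ⟨hS, hT, hST, u, huS, by simpa [U, ncard_neighborSet_eq_degree] using hu⟩
  refine (Nat.cast_le.mpr (Set.ncard_le_ncard hsub)).trans ?_
  obtain rfl | rfl | hp := (by omega : p = 0 ∨ p = 1 ∨ 2 ≤ p)
  · rw [bicliquesMeeting_zero, Set.ncard_empty, Nat.cast_zero]
    positivity
  · simpa using ncard_bicliquesMeeting_one_le hG (by omega) (by omega) hsq hε
      (by simpa using le_of_max_le_left hn)
  have ht : (0 : ℝ) < t := by exact_mod_cast (show 0 < t by omega)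
  have hn₁ : 1 ≤ n :=
    (Nat.ceil_pos.mpr (div_pos (pow_pos ht p) hε)).trans_le (le_of_max_le_right hn)
  have htp : (t : ℝ) ^ p ≤ ε * n :=
    (div_le_iff₀' hε).mp ((Nat.le_ceil _).trans (by exact_mod_cast le_of_max_le_right hn))
  calc _ ≤ (t : ℝ) ^ p * n ^ q := by
        simpa using ncard_bicliquesMeeting_le_pow hG (by omega) hsq U
    _ ≤ ε * n * n ^ q := by gcongr
    _ = ε * n ^ (q + 1) := by ring
    _ ≤ ε * n ^ (p + q - 1) := by
        gcongr
        · exact_mod_cast hn₁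
        · omega
end

section
/- The number of edges of a complete r-partite graph on n vertices is maximized exactly when the part sizes are as equal as possible, i.e., each part has size ⌊n/r⌋ or ⌈n/r⌉ (the Turán graph T(n,r)). -/
/-
Writing `a = ⌊n/r⌋` and `b = ⌈n/r⌉`, so that `a ≤ b ≤ a + 1`, no integer lies strictly between
`a` and `b`, hence `(x - a)(x - b) ≥ 0`, i.e. `x² + ab ≥ (a + b)x`, for every natural `x`, with
equality iff `x ∈ {a, b}`. In a complete multipartite graph with part sizes `c i` summing to `n`,
`2|E| = n² - ∑ cᵢ²`, so summing the inequality over the parts bounds `2|E|` by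
`n² - (a + b)n + r·ab`, with equality exactly for the part sizes in `{a, b}`. The Turán graph
(parts the residue classes mod `r`, of sizes `a` or `a + 1 = b`) attains the bound.
-/

open SimpleGraph Finset

theorem Nat.add_sub_one_div_eq {n r : ℕ} (hr : 0 < r) :
    (n + r - 1) / r = n / r + if n % r = 0 then 0 else 1 := by
  have hn := Nat.div_add_mod n r
  have hm := Nat.mod_lt n hr
  apply Nat.div_eq_of_lt_le <;> split_ifs <;> grind

theorem Nat.div_le_add_sub_one_div (n r : ℕ) : n / r ≤ (n + r - 1) / r := by
  rcases r.eq_zero_or_pos with rfl | hr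
  · simp
  · exact Nat.div_le_div_right (by omega)

theorem Nat.add_sub_one_div_le_div_add_one {n r : ℕ} (hr : 0 < r) :
    (n + r - 1) / r ≤ n / r + 1 := by
  rw [Nat.add_sub_one_div_eq hr]
  split_ifs <;> omega

theorem Int.sub_mul_sub_nonneg {a b x : ℤ} (hab : a ≤ b) (hba : b ≤ a + 1) :
    0 ≤ (x - a) * (x - b) := by
  rcases le_or_gt x a with hx | hx
  · exact mul_nonneg_of_nonpos_of_nonpos (by linarith) (by linarith)
  · exact mul_nonneg (by linarith) (by linarith)

theorem Nat.add_mul_le_sq_add_mul {a b : ℕ} (hab : a ≤ b) (hba : b ≤ a + 1) (x : ℕ) :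
    (a + b) * x ≤ x ^ 2 + a * b := by
  have := Int.sub_mul_sub_nonneg (x := x) (Int.ofNat_le.2 hab) (by omega)
  zify
  nlinarith

theorem Nat.add_mul_eq_sq_add_mul_iff {a b x : ℕ} :
    (a + b) * x = x ^ 2 + a * b ↔ x = a ∨ x = b := by
  have h := _root_.mul_eq_zero (a := (x : ℤ) - a) (b := (x : ℤ) - b)
  simp only [sub_eq_zero, Nat.cast_inj] at h
  rw [← h]
  zify
  constructor <;> intro h <;> linarith

namespace Finset

variable {ι : Type*} {a b : ℕ} (s : Finset ι) (x : ι → ℕ)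

theorem add_mul_sum_le_sum_sq_add_card_mul (hab : a ≤ b) (hba : b ≤ a + 1) :
    (a + b) * ∑ i ∈ s, x i ≤ ∑ i ∈ s, x i ^ 2 + #s * (a * b) := by
  rw [mul_sum, ← smul_eq_mul, ← sum_const, ← sum_add_distrib]
  exact sum_le_sum fun i _ ↦ Nat.add_mul_le_sq_add_mul hab hba (x i)

theorem add_mul_sum_eq_sum_sq_add_card_mul_iff (hab : a ≤ b) (hba : b ≤ a + 1) :
    (a + b) * ∑ i ∈ s, x i = ∑ i ∈ s, x i ^ 2 + #s * (a * b) ↔ ∀ i ∈ s, x i = a ∨ x i = b := by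
  rw [mul_sum, ← smul_eq_mul, ← sum_const, ← sum_add_distrib,
    sum_eq_sum_iff_of_le fun i _ ↦ Nat.add_mul_le_sq_add_mul hab hba (x i)]
  simp only [Nat.add_mul_eq_sq_add_mul_iff]

end Finset

theorem Fin.card_filter_val_mod_eq {n r i : ℕ} (hr : 0 < r) (hi : i < r) :
    #{v : Fin n | (v : ℕ) % r = i} = n / r + if i < n % r then 1 else 0 := by
  have hcount := Nat.count_modEq_card n hr i
  rw [Nat.mod_eq_of_lt hi, Nat.count_eq_card_filter_range] at hcount
  rw [← hcount, card_filter, card_filter, sum_range fun x ↦ if x ≡ i [MOD r] then 1 else 0]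
  simp [Nat.ModEq, Nat.mod_eq_of_lt hi]

namespace SimpleGraph

theorem two_mul_ncard_edgeSet_comap_top_add_sum_sq {V ι : Type*} [Fintype V] [DecidableEq ι]
    (f : V → ι) (s : Finset ι) (hs : ∀ v, f v ∈ s) :
    2 * ((⊤ : SimpleGraph ι).comap f).edgeSet.ncard + ∑ i ∈ s, #{v | f v = i} ^ 2 =
      Fintype.card V ^ 2 := by
  classical
  set G := (⊤ : SimpleGraph ι).comap f
  have hdeg (v : V) : G.degree v + #{w | f w = f v} = Fintype.card V := by
    rw [← card_univ, ← card_filter_add_card_filter_not (fun w ↦ f w ≠ f v) (s := univ), degree,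
      neighborFinset_eq_filter]
    simp [G, eq_comm]
  have hfiber : ∑ v, #{w | f w = f v} = ∑ i ∈ s, #{v | f v = i} ^ 2 := by
    rw [← sum_fiberwise_of_maps_to fun v _ ↦ hs v]
    refine sum_congr rfl fun i _ ↦ ?_
    rw [sum_congr rfl fun v hv ↦ by rw [(mem_filter.1 hv).2], sum_const, smul_eq_mul, sq]
  rw [← coe_edgeFinset, Set.ncard_coe_finset, ← sum_degrees_eq_twice_card_edges, ← hfiber,
    ← sum_add_distrib, sum_congr rfl fun v _ ↦ hdeg v, sum_const, card_univ, smul_eq_mul, sq]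

theorem two_mul_ncard_edgeSet_completeMultipartiteGraph_add_sum_sq {r : ℕ} (c : Fin r → ℕ) :
    2 * (completeMultipartiteGraph (fun i ↦ Fin (c i))).edgeSet.ncard + ∑ i, c i ^ 2 =
      (∑ i, c i) ^ 2 := by
  have hpart (i : Fin r) : #{v : Σ i, Fin (c i) | v.1 = i} = c i := by
    rw [show ({v | v.1 = i} : Finset (Σ i, Fin (c i))) = ({i} : Finset (Fin r)).sigma fun _ ↦ univ
      by ext; simp, card_sigma]
    simp
  simpa [hpart] using two_mul_ncard_edgeSet_comap_top_add_sum_sq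
    (Sigma.fst : (Σ i, Fin (c i)) → Fin r) univ fun _ ↦ mem_univ _

theorem turanGraph_eq_comap (n r : ℕ) :
    turanGraph n r = (⊤ : SimpleGraph ℕ).comap fun v : Fin n ↦ (v : ℕ) % r := by
  ext
  simp [turanGraph_adj]

theorem two_mul_ncard_edgeSet_turanGraph_add {n r : ℕ} (hr : 0 < r) :
    2 * (turanGraph n r).edgeSet.ncard + (n / r + (n + r - 1) / r) * n =
      n ^ 2 + r * (n / r * ((n + r - 1) / r)) := by
  have hT := two_mul_ncard_edgeSet_comap_top_add_sum_sq (fun v : Fin n ↦ (v : ℕ) % r) (range r)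
    fun v ↦ mem_range.2 (Nat.mod_lt _ hr)
  rw [← turanGraph_eq_comap, Fintype.card_fin] at hT
  have hsum : ∑ i ∈ range r, #{v : Fin n | (v : ℕ) % r = i} = n := by
    simpa using (card_eq_sum_card_fiberwise (s := univ) (f := fun v : Fin n ↦ (v : ℕ) % r)
      fun v _ ↦ mem_range.2 (Nat.mod_lt _ hr)).symm
  have hparts : ∀ i ∈ range r, #{v : Fin n | (v : ℕ) % r = i} = n / r ∨
      #{v : Fin n | (v : ℕ) % r = i} = (n + r - 1) / r := by
    intro i hi
    rw [Fin.card_filter_val_mod_eq hr (mem_range.1 hi), Nat.add_sub_one_div_eq hr]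
    grind
  have hbound := (add_mul_sum_eq_sum_sq_add_card_mul_iff (range r) _
    (Nat.div_le_add_sub_one_div n r) (Nat.add_sub_one_div_le_div_add_one hr)).2 hparts
  rw [hsum, card_range] at hbound
  omega

end SimpleGraph

/-- among complete `r`-partite graphs on `n` vertices, the number of edges is
maximized exactly when all part sizes are `⌊n/r⌋` or `⌈n/r⌉`, i.e. by the Turán graph. -/
theorem stmt_9 (n r : ℕ) (hr : 1 ≤ r) (c : Fin r → ℕ) (hsum : ∑ i, c i = n) :
    (completeMultipartiteGraph (fun i : Fin r => Fin (c i))).edgeSet.ncard ≤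
      (turanGraph n r).edgeSet.ncard ∧
    ((completeMultipartiteGraph (fun i : Fin r => Fin (c i))).edgeSet.ncard =
        (turanGraph n r).edgeSet.ncard ↔
      ∀ i, c i = n / r ∨ c i = (n + r - 1) / r) := by
  have hab := Nat.div_le_add_sub_one_div n r
  have hba := Nat.add_sub_one_div_le_div_add_one (n := n) hr
  have hC := two_mul_ncard_edgeSet_completeMultipartiteGraph_add_sum_sq c
  have hT := two_mul_ncard_edgeSet_turanGraph_add (n := n) hr
  have hle := add_mul_sum_le_sum_sq_add_card_mul univ c hab hba
  have hiff := add_mul_sum_eq_sum_sq_add_card_mul_iff univ c hab hba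
  simp only [hsum, card_univ, Fintype.card_fin, mem_univ, true_imp_iff] at hC hle hiff
  exact ⟨by omega, by rw [← hiff]; omega⟩
end

section
/- Let r ≥ 2 and let T, T' be complete r-partite graphs on the same vertex set where T' is obtained from T by moving vertices between two parts so that the number of edges does not decrease and the number of copies of each of K_{a,a}, K_{a-1,a}, K_{a-1,a-1}, K_{a-2,a} within the union of those two parts does not decrease. Then for each of the complete r-partite graphs K = K_{a-1,a,...,a}, K' = K_{a-2,a,...,a}, K'' = K_{a-1,a-1,a,...,a}: the number of copies in T' is at least the number of copies in T. -/
open SimpleGraph Finset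

/-! Copies of a complete multipartite pattern with part sizes `b` in a complete multipartite host
are counted by placements, i.e. choices of a vertex set for every part with different parts in
different host classes: every copy comes from exactly `#(sizePerms b)` placements. Cutting each
part of a placement into its trace on the two modified classes and its remainder writes the number
of placements as a sum over traces `d ≤ b` of (placements of `d` into `K_{c i₁, c i₂}`) times
(placements of `b - d` into the other `r - 2` classes); the second factor does not see the move.
A trace meeting one part is counted by a binomial coefficient of `c i₁ + c i₂`, one meeting two
parts by a multiple of the number of copies of `K_{d j, d k}`. When the remainder fits into `r - 2`
classes, the trace fills two parts of the pattern, which forces `(d j, d k)` to be one of the four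
bipartite shapes of the hypothesis. -/

theorem Nat.card_eq_card_mul_card_of_fibres_torsor {X Y T : Type*} (f : X → Y)
    (hf : Function.Surjective f) (act : T → X → X) (hact : ∀ t x, f (act t x) = f x)
    (huniq : ∀ x x', f x = f x' → ∃! t, act t x = x') :
    Nat.card X = Nat.card Y * Nat.card T := by
  let σ := Function.surjInv hf
  have hσ : ∀ y, f (σ y) = y := Function.surjInv_eq hf
  have hfib : ∀ x, ∃! t, act t (σ (f x)) = x := fun x => huniq _ _ (hσ _)
  let e : X ≃ Y × T :=
    { toFun := fun x => (f x, (hfib x).exists.choose)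
      invFun := fun yt => act yt.2 (σ yt.1)
      left_inv := fun x => (hfib x).exists.choose_spec
      right_inv := by
        rintro ⟨y, t⟩
        have hy : f (act t (σ y)) = y := (hact t _).trans (hσ y)
        exact Prod.ext hy ((hfib _).unique (hfib _).exists.choose_spec (by rw [hy])) }
  rw [Nat.card_congr e, Nat.card_prod]

namespace Graph

variable {α β β' γ γ' : Type*} {s : ℕ}

/-- `p` sends a host vertex to its class, and `A i` is the vertex set of part `i` of the pattern. -/
def Placements (b : Fin s → ℕ) (p : β → γ) : Set (Fin s → Finset β) :=
  {A | (∀ i, #(A i) = b i) ∧ ∀ ⦃i j⦄, i ≠ j → ∀ x ∈ A i, ∀ y ∈ A j, p x ≠ p y}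

/-- Empty parts are pinned, so that the placements giving the same copy form one free orbit. -/
def sizePerms (b : Fin s → ℕ) : Set (Equiv.Perm (Fin s)) :=
  {τ | (∀ i, b (τ i) = b i) ∧ ∀ i, b i = 0 → τ i = i}

lemma card_sizePerms_pos (b : Fin s → ℕ) : 0 < Nat.card (sizePerms b) :=
  Nat.card_pos_iff.2 ⟨⟨⟨1, fun _ => rfl, fun _ _ => rfl⟩⟩, inferInstance⟩

namespace Placements

variable {b : Fin s → ℕ} {p : β → γ} {A A' : Fin s → Finset β}

lemma index_eq_of_mem (hA : A ∈ Placements b p) {i j : Fin s} {x : β} (hi : x ∈ A i)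
    (hj : x ∈ A j) : i = j :=
  by_contra fun h => hA.2 h x hi x hj rfl

lemma part_nonempty (hA : A ∈ Placements b p) {i : Fin s} (hi : b i ≠ 0) : (A i).Nonempty :=
  Finset.card_ne_zero.1 (by rw [hA.1 i]; exact hi)

lemma part_eq_empty (hA : A ∈ Placements b p) {i : Fin s} (hi : b i = 0) : A i = ∅ :=
  Finset.card_eq_zero.1 ((hA.1 i).trans hi)

lemma comp_perm_mem (hA : A ∈ Placements b p) {τ : Equiv.Perm (Fin s)}
    (hτ : τ ∈ sizePerms b) : A ∘ τ ∈ Placements b p :=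
  ⟨fun i => (hA.1 (τ i)).trans (hτ.1 i),
    fun _ _ hij => hA.2 fun h => hij (τ.injective h)⟩

lemma perm_eq_of_comp_eq (hA : A ∈ Placements b p) {τ τ' : Equiv.Perm (Fin s)}
    (hτ : τ ∈ sizePerms b) (hτ' : τ' ∈ sizePerms b) (h : A ∘ τ = A ∘ τ') : τ = τ' := by
  ext i
  by_cases hi : b i = 0
  · rw [hτ.2 i hi, hτ'.2 i hi]
  obtain ⟨x, hx⟩ := part_nonempty hA ((hτ.1 i).trans_ne hi)
  have hAi : A (τ i) = A (τ' i) := congrFun h i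
  exact congrArg Fin.val (index_eq_of_mem hA hx (hAi ▸ hx))

def toSubgraph (G : SimpleGraph β) (hG : ∀ x y, G.Adj x y ↔ p x ≠ p y) (A : Fin s → Finset β)
    (hA : A ∈ Placements b p) : G.Subgraph where
  verts := ⋃ i, ↑(A i)
  Adj x y := ∃ i j, i ≠ j ∧ x ∈ A i ∧ y ∈ A j
  adj_sub := by rintro x y ⟨i, j, hij, hx, hy⟩; exact (hG x y).2 (hA.2 hij x hx y hy)
  edge_vert := by rintro x y ⟨i, j, hij, hx, hy⟩; exact Set.mem_iUnion.2 ⟨i, hx⟩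
  symm := ⟨by rintro x y ⟨i, j, hij, hx, hy⟩; exact ⟨j, i, hij.symm, hy, hx⟩⟩

variable {G : SimpleGraph β} {hG : ∀ x y, G.Adj x y ↔ p x ≠ p y}

lemma mem_verts_toSubgraph (hA : A ∈ Placements b p) {x : β} :
    x ∈ (toSubgraph G hG A hA).verts ↔ ∃ i, x ∈ A i := by
  simp [toSubgraph]

lemma toSubgraph_comp_perm (hA : A ∈ Placements b p) {τ : Equiv.Perm (Fin s)}
    (hτ : τ ∈ sizePerms b) :
    toSubgraph G hG (A ∘ τ) (comp_perm_mem hA hτ) = toSubgraph G hG A hA := by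
  apply SimpleGraph.Subgraph.ext
  · exact τ.iSup_comp (g := fun i => (A i : Set β))
  · ext x y
    exact ⟨fun ⟨i, j, hij, hx, hy⟩ => ⟨τ i, τ j, τ.injective.ne hij, hx, hy⟩,
      fun ⟨i, j, hij, hx, hy⟩ => ⟨τ.symm i, τ.symm j, τ.symm.injective.ne hij,
        by simpa using hx, by simpa using hy⟩⟩

lemma mem_part_iff_not_adj (hA : A ∈ Placements b p) {i : Fin s} {x : β} (hx : x ∈ A i) (y : β) :
    y ∈ A i ↔ y ∈ (toSubgraph G hG A hA).verts ∧ ¬(toSubgraph G hG A hA).Adj x y := by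
  rw [mem_verts_toSubgraph]
  constructor
  · intro hy
    refine ⟨⟨i, hy⟩, fun ⟨i', j', hij, hx', hy'⟩ => hij ?_⟩
    rw [index_eq_of_mem hA hx' hx, index_eq_of_mem hA hy' hy]
  · rintro ⟨⟨j, hy⟩, hxy⟩
    by_contra hyi
    exact hxy ⟨i, j, fun h => hyi (h ▸ hy), hx, hy⟩

lemma part_eq_of_toSubgraph_eq (hA : A ∈ Placements b p) (hA' : A' ∈ Placements b p)
    (h : toSubgraph G hG A hA = toSubgraph G hG A' hA') {i j : Fin s} {x : β}
    (hi : x ∈ A i) (hj : x ∈ A' j) : A i = A' j := by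
  ext y
  rw [mem_part_iff_not_adj (hG := hG) hA hi, mem_part_iff_not_adj (hG := hG) hA' hj, h]

lemma exists_perm_of_toSubgraph_eq (hA : A ∈ Placements b p) (hA' : A' ∈ Placements b p)
    (h : toSubgraph G hG A hA = toSubgraph G hG A' hA') :
    ∃ τ ∈ sizePerms b, A ∘ τ = A' := by
  have hpart : ∀ i, b i ≠ 0 → ∃ j, A j = A' i := by
    intro i hi
    obtain ⟨x, hx⟩ := part_nonempty hA' hi
    obtain ⟨j, hj⟩ := (mem_verts_toSubgraph hA).1 (h ▸ (mem_verts_toSubgraph hA').2 ⟨i, hx⟩)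
    exact ⟨j, part_eq_of_toSubgraph_eq hA hA' h hj hx⟩
  choose! t ht using hpart
  set t' : Fin s → Fin s := fun i => if b i = 0 then i else t i with ht'
  have hAt' : ∀ i, A (t' i) = A' i := by
    intro i
    by_cases hi : b i = 0
    · simp only [ht', if_pos hi, part_eq_empty hA hi, part_eq_empty hA' hi]
    · simp only [ht', if_neg hi, ht i hi]
  have hbt' : ∀ i, b (t' i) = b i := fun i => by rw [← hA.1, hAt', hA'.1]
  have ht'inj : Function.Injective t' := by
    intro i i' hii'
    have hb : b i = b i' := by rw [← hbt', hii', hbt']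
    by_cases hi : b i = 0
    · simpa only [ht', if_pos hi, if_pos (hb ▸ hi)] using hii'
    obtain ⟨x, hx⟩ := part_nonempty hA' hi
    exact index_eq_of_mem hA' hx (by rw [← hAt', ← hii', hAt']; exact hx)
  refine ⟨Equiv.ofBijective t' ht'inj.bijective_of_finite, ⟨hbt', fun i hi => ?_⟩,
    funext hAt'⟩
  simp [ht', hi]

lemma nonempty_iso_toSubgraph [Fintype α] {F : SimpleGraph α} {q : α → Fin s}
    (hF : ∀ u v, F.Adj u v ↔ q u ≠ q v) (hb : ∀ i, Fintype.card {u // q u = i} = b i)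
    (hA : A ∈ Placements b p) : Nonempty (F ≃g (toSubgraph G hG A hA).coe) := by
  choose idx hidx using fun x : (toSubgraph G hG A hA).verts => (mem_verts_toSubgraph hA).1 x.2
  have hfib : ∀ i, Nonempty ({u // q u = i} ≃ {x // idx x = i}) := by
    intro i
    have e : {x // idx x = i} ≃ A i :=
      { toFun := fun x => ⟨x.1, by simpa only [x.2] using hidx x.1⟩
        invFun := fun y => ⟨⟨y, (mem_verts_toSubgraph hA).2 ⟨i, y.2⟩⟩,
          index_eq_of_mem hA (hidx _) y.2⟩
        left_inv := fun _ => rfl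
        right_inv := fun _ => rfl }
    have : Finite {x // idx x = i} := .of_equiv _ e.symm
    rw [← Finite.card_eq, Nat.card_congr e, Nat.card_eq_fintype_card, hb, Nat.card_eq_finsetCard,
      hA.1]
  let f := Equiv.ofFiberEquiv fun i => (hfib i).some
  have hf : ∀ u, (f u : β) ∈ A (q u) := fun u => by
    simpa only [f, Equiv.ofFiberEquiv_map] using hidx (f u)
  refine ⟨⟨f, fun {u v} => ?_⟩⟩
  change (∃ i j, i ≠ j ∧ (f u : β) ∈ A i ∧ (f v : β) ∈ A j) ↔ F.Adj u v
  rw [hF]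
  constructor
  · rintro ⟨i, j, hij, hu, hv⟩
    rwa [index_eq_of_mem hA (hf u) hu, index_eq_of_mem hA (hf v) hv]
  · exact fun h => ⟨q u, q v, h, hf u, hf v⟩

lemma exists_toSubgraph_eq [Fintype α] {F : SimpleGraph α} {q : α → Fin s}
    (hF : ∀ u v, F.Adj u v ↔ q u ≠ q v) (hb : ∀ i, Fintype.card {u // q u = i} = b i)
    (G' : G.Subgraph) (hG' : Nonempty (F ≃g G'.coe)) :
    ∃ A, ∃ hA : A ∈ Placements b p, toSubgraph G hG A hA = G' := by
  classical
  obtain ⟨e⟩ := hG'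
  let A : Fin s → Finset β := fun i =>
    ({u | q u = i} : Finset α).map ⟨fun u => (e u : β), fun u v h => e.injective (Subtype.ext h)⟩
  have hmem : ∀ i x, x ∈ A i ↔ ∃ u, q u = i ∧ (e u : β) = x := by
    intro i x
    simp only [A, Finset.mem_map, Finset.mem_filter, Finset.mem_univ, true_and]
    rfl
  have hadj : ∀ u v, q u ≠ q v ↔ G'.Adj (e u) (e v) := fun u v =>
    (hF u v).symm.trans e.map_rel_iff.symm
  have hA : A ∈ Placements b p := by
    refine ⟨fun i => by simp [A, ← hb, Fintype.card_subtype], ?_⟩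
    rintro i j hij x hx y hy
    obtain ⟨u, rfl, rfl⟩ := (hmem i x).1 hx
    obtain ⟨v, rfl, rfl⟩ := (hmem j y).1 hy
    exact (hG _ _).1 (G'.adj_sub ((hadj u v).1 hij))
  refine ⟨A, hA, SimpleGraph.Subgraph.ext ?_ ?_⟩
  · ext x
    rw [mem_verts_toSubgraph]
    refine ⟨fun ⟨i, hx⟩ => ?_, fun hx => ⟨_, (hmem _ x).2 ⟨e.symm ⟨x, hx⟩, rfl, by simp⟩⟩⟩
    obtain ⟨u, -, rfl⟩ := (hmem i x).1 hx
    exact (e u).2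
  · ext x y
    change (∃ i j, i ≠ j ∧ x ∈ A i ∧ y ∈ A j) ↔ G'.Adj x y
    constructor
    · rintro ⟨i, j, hij, hx, hy⟩
      obtain ⟨u, rfl, rfl⟩ := (hmem i x).1 hx
      obtain ⟨v, rfl, rfl⟩ := (hmem j y).1 hy
      exact (hadj u v).1 hij
    · intro h
      obtain ⟨u, hu⟩ := e.surjective ⟨x, G'.edge_vert h⟩
      obtain ⟨v, hv⟩ := e.surjective ⟨y, G'.edge_vert h.symm⟩
      refine ⟨q u, q v, (hadj u v).2 ?_, (hmem _ x).2 ⟨u, rfl, by rw [hu]⟩,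
        (hmem _ y).2 ⟨v, rfl, by rw [hv]⟩⟩
      rw [hu, hv]
      exact h

end Placements

open Placements in
theorem copyCount_mul_card_sizePerms [Fintype α] {b : Fin s → ℕ} {p : β → γ}
    {F : SimpleGraph α} {G : SimpleGraph β} {q : α → Fin s}
    (hF : ∀ u v, F.Adj u v ↔ q u ≠ q v) (hG : ∀ x y, G.Adj x y ↔ p x ≠ p y)
    (hb : ∀ i, Fintype.card {u // q u = i} = b i) :
    copyCount F G * Nat.card (sizePerms b) = Nat.card (Placements b p) := by
  rw [copyCount, ← Nat.card_coe_set_eq]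
  refine (Nat.card_eq_card_mul_card_of_fibres_torsor
    (fun A : Placements b p => (⟨toSubgraph G hG A.1 A.2,
      nonempty_iso_toSubgraph hF hb A.2⟩ : {G' : G.Subgraph | Nonempty (F ≃g G'.coe)}))
    ?_ (fun τ A => ⟨A.1 ∘ τ.1, comp_perm_mem A.2 τ.2⟩)
    (fun τ A => Subtype.ext (toSubgraph_comp_perm (hG := hG) A.2 τ.2)) ?_).symm
  · rintro ⟨G', hG'⟩
    obtain ⟨A, hA, rfl⟩ := exists_toSubgraph_eq (hG := hG) hF hb G' hG'
    exact ⟨⟨A, hA⟩, rfl⟩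
  · rintro ⟨A, hA⟩ ⟨A', hA'⟩ h
    obtain ⟨τ, hτ, hτA⟩ := exists_perm_of_toSubgraph_eq (hG := hG) hA hA' (congrArg Subtype.val h)
    refine ⟨⟨τ, hτ⟩, Subtype.ext hτA, fun τ' hτ' => Subtype.ext ?_⟩
    exact perm_eq_of_comp_eq hA τ'.2 hτ (congrArg Subtype.val hτ' |>.trans hτA.symm)

lemma placements_congr {b : Fin s → ℕ} {p : β → γ} {p' : β → γ'}
    (h : ∀ x y, p x = p y ↔ p' x = p' y) : Placements b p = Placements b p' := by
  simp only [Placements, ne_eq, h]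

lemma card_placements_comp_equiv {b : Fin s → ℕ} {p : β → γ} (e : β' ≃ β) :
    Nat.card (Placements b (p ∘ e)) = Nat.card (Placements b p) := by
  refine Nat.card_congr ((Equiv.piCongrRight fun _ => e.finsetCongr).subtypeEquiv ?_)
  intro A
  change (_ ∧ _) ↔ (_ ∧ _)
  simp only [Equiv.piCongrRight_apply, Pi.map_apply, Equiv.finsetCongr_apply, Finset.card_map,
    Finset.forall_mem_map, Function.comp_apply, Equiv.coe_toEmbedding]

section Sum

variable {β₁ β₂ : Type*} {b : Fin s → ℕ} {p : β₁ ⊕ β₂ → γ}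

lemma disjSum_mem_placements_iff (hp : ∀ x y, p (.inl x) ≠ p (.inr y))
    {B₁ : Fin s → Finset β₁} {B₂ : Fin s → Finset β₂} :
    (fun i => (B₁ i).disjSum (B₂ i)) ∈ Placements b p ↔ (∀ i, #(B₁ i) + #(B₂ i) = b i) ∧
      B₁ ∈ Placements (fun i => #(B₁ i)) (p ∘ Sum.inl) ∧
      B₂ ∈ Placements (fun i => #(B₂ i)) (p ∘ Sum.inr) := by
  change (_ ∧ _) ↔ _ ∧ (_ ∧ _) ∧ (_ ∧ _)
  simp only [Finset.card_disjSum, Sum.forall, Finset.inl_mem_disjSum,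
    Finset.inr_mem_disjSum, Function.comp_apply, ne_eq, hp, (hp _ _).symm, not_false_eq_true,
    implies_true, and_true, true_and, imp_and, forall_and]

lemma toLeft_disjSum_toRight_mem {A : Fin s → Finset (β₁ ⊕ β₂)} (hA : A ∈ Placements b p) :
    (fun i => (A i).toLeft.disjSum (A i).toRight) ∈ Placements b p := by
  simpa only [Finset.toLeft_disjSum_toRight] using hA

def leftSizes (A : Placements b p) : Finset.Iic b :=
  ⟨fun i => #(A.1 i).toLeft, Finset.mem_Iic.2 fun i => A.2.1 i ▸ Finset.card_toLeft_le⟩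

noncomputable def leftSizesFiberEquiv (hp : ∀ x y, p (.inl x) ≠ p (.inr y)) (d : Finset.Iic b) :
    {A : Placements b p // leftSizes A = d} ≃ Placements d.1 (p ∘ Sum.inl) × Placements (b - d.1) (p ∘ Sum.inr) where
  toFun A :=
    have hA := (disjSum_mem_placements_iff hp).1 (toLeft_disjSum_toRight_mem A.1.2)
    have hd : ∀ i, #(A.1.1 i).toLeft = d.1 i := congrFun (congrArg Subtype.val A.2)
    (⟨_, hd, hA.2.1.2⟩,
      ⟨_, fun i => by have := hA.1 i; have := hd i; simp only [Pi.sub_apply]; omega, hA.2.2.2⟩)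
  invFun B := ⟨⟨_, (disjSum_mem_placements_iff hp).2
      ⟨fun i => by
        rw [B.1.2.1, B.2.2.1, Pi.sub_apply]
        exact Nat.add_sub_cancel' (Finset.mem_Iic.1 d.2 i),
        ⟨fun _ => rfl, B.1.2.2⟩, ⟨fun _ => rfl, B.2.2.2⟩⟩⟩,
    Subtype.ext (funext fun i => by simp [leftSizes, B.1.2.1 i])⟩
  left_inv A := by
    ext : 2
    exact funext fun i => Finset.toLeft_disjSum_toRight
  right_inv B := by ext <;> simp

theorem card_placements_sum [Finite β₁] [Finite β₂] (hp : ∀ x y, p (.inl x) ≠ p (.inr y)) :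
    Nat.card (Placements b p) = ∑ d ∈ Finset.Iic b,
      Nat.card (Placements d (p ∘ Sum.inl)) * Nat.card (Placements (b - d) (p ∘ Sum.inr)) := by
  calc Nat.card (Placements b p) = Nat.card (Σ d : Finset.Iic b, {A : Placements b p // leftSizes A = d}) :=
        Nat.card_congr (Equiv.sigmaFiberEquiv leftSizes).symm
    _ = ∑ d : Finset.Iic b, Nat.card (Placements d.1 (p ∘ Sum.inl)) *
          Nat.card (Placements (b - d.1) (p ∘ Sum.inr)) := by
        simp only [Nat.card_sigma, Nat.card_congr (leftSizesFiberEquiv hp _), Nat.card_prod]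
    _ = _ := Finset.sum_coe_sort _ (fun d => Nat.card (Placements d (p ∘ Sum.inl)) *
          Nat.card (Placements (b - d) (p ∘ Sum.inr)))

end Sum

section SmallSupport

variable {b : Fin s → ℕ} {p : β → γ}

lemma card_placements_of_forall_eq_zero (hb : ∀ i, b i = 0) : Nat.card (Placements b p) = 1 := by
  have : Placements b p = {fun _ => ∅} := by
    ext A
    refine ⟨fun hA => funext fun i => Placements.part_eq_empty hA (hb i), ?_⟩
    rintro rfl
    exact ⟨fun i => (hb i).symm, fun _ _ _ x hx => absurd hx (Finset.notMem_empty x)⟩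
  rw [this, Nat.card_unique]

lemma card_placements_of_eq_zero_of_ne [Fintype β] {j : Fin s} (hb : ∀ i, i ≠ j → b i = 0) :
    Nat.card (Placements b p) = (Fintype.card β).choose (b j) := by
  classical
  rw [← Fintype.card_finset_len, ← Nat.card_eq_fintype_card]
  refine Nat.card_congr
    { toFun := fun A => ⟨A.1 j, A.2.1 j⟩
      invFun := fun t => ⟨fun i => if i = j then t.1 else ∅, fun i => ?_, ?_⟩
      left_inv := fun A => Subtype.ext (funext fun i => ?_)
      right_inv := fun t => Subtype.ext (if_pos rfl) }
  · by_cases hi : i = j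
    · subst hi; simpa using t.2
    · simp [hi, hb i hi]
  · intro i₁ i₂ h₁₂ x hx y hy
    by_cases h₁ : i₁ = j
    · simp [show i₂ ≠ j from fun h => h₁₂ (h₁.trans h.symm)] at hy
    · simp [h₁] at hx
  · by_cases hi : i = j
    · subst hi; simp
    · simp [hi, Placements.part_eq_empty A.2 (hb i hi)]

lemma card_support_le_of_card_placements_ne_zero [Fintype γ] (h : Nat.card (Placements b p) ≠ 0) :
    Fintype.card {i // b i ≠ 0} ≤ Fintype.card γ := by
  obtain ⟨⟨A, hA⟩⟩ := (Nat.card_ne_zero.1 h).1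
  choose x hx using fun i : {i // b i ≠ 0} => Placements.part_nonempty hA i.2
  refine Fintype.card_le_of_injective (fun i => p (x i)) fun i i' hii' => ?_
  by_contra hne
  exact hA.2 (fun h => hne (Subtype.ext h)) _ (hx i) _ (hx i') hii'

end SmallSupport

lemma copyCount_completeBipartiteGraph_mul_card_sizePerms (m n : ℕ) {d : Fin s → ℕ}
    {j k : Fin s} (hjk : j ≠ k) (hd : ∀ i, i ≠ j → i ≠ k → d i = 0) :
    copyCount (completeBipartiteGraph (Fin (d j)) (Fin (d k)))
        (completeBipartiteGraph (Fin m) (Fin n)) * Nat.card (sizePerms d) =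
      Nat.card (Placements d (Sum.isLeft : Fin m ⊕ Fin n → Bool)) := by
  refine copyCount_mul_card_sizePerms (q := Sum.elim (fun _ => j) fun _ => k) ?_ ?_ fun i => ?_
  · rintro (u | u) (v | v) <;> simp [hjk, hjk.symm]
  · rintro (x | x) (y | y) <;> simp
  · rw [Fintype.card_congr Equiv.subtypeSum, Fintype.card_sum, Fintype.card_subtype,
      Fintype.card_subtype]
    by_cases hij : i = j
    · subst hij; simp [hjk.symm]
    by_cases hik : i = k
    · subst hik; simp [Ne.symm hij]
    simp [Ne.symm hij, Ne.symm hik, hd i hij hik]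

/-- A placement into a bipartite host meets at most two parts; with one part its count
`(m + n).choose (d j)` only sees the total size of the host. -/
theorem card_placements_isLeft_le (S : ℕ → ℕ → Prop) {m n m' n' : ℕ} (hmn : m + n = m' + n')
    (hS : ∀ x y, S x y →
      copyCount (completeBipartiteGraph (Fin x) (Fin y)) (completeBipartiteGraph (Fin m) (Fin n)) ≤
        copyCount (completeBipartiteGraph (Fin x) (Fin y))
          (completeBipartiteGraph (Fin m') (Fin n')))
    (d : Fin s → ℕ) (hd : ∀ j k, j ≠ k → (∀ i, i ≠ j → i ≠ k → d i = 0) → d j ≠ 0 → d k ≠ 0 →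
      S (d j) (d k) ∨ S (d k) (d j)) :
    Nat.card (Placements d (Sum.isLeft : Fin m ⊕ Fin n → Bool)) ≤
      Nat.card (Placements d (Sum.isLeft : Fin m' ⊕ Fin n' → Bool)) := by
  classical
  by_cases h0 : Nat.card (Placements d (Sum.isLeft : Fin m ⊕ Fin n → Bool)) = 0
  · exact h0 ▸ Nat.zero_le _
  have hsupp := card_support_le_of_card_placements_ne_zero h0
  rw [Fintype.card_subtype, Fintype.card_bool] at hsupp
  have hmem : ∀ {T : Finset (Fin s)}, ({i | d i ≠ 0} : Finset (Fin s)) = T →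
      ∀ i, i ∉ T → d i = 0 := by
    rintro T rfl i hi
    by_contra h
    exact hi (Finset.mem_filter.2 ⟨Finset.mem_univ i, h⟩)
  obtain hT | hT | hT : #{i | d i ≠ 0} = 0 ∨ #{i | d i ≠ 0} = 1 ∨ #{i | d i ≠ 0} = 2 := by omega
  · have := hmem (Finset.card_eq_zero.1 hT)
    rw [card_placements_of_forall_eq_zero fun i => this i (Finset.notMem_empty i),
      card_placements_of_forall_eq_zero fun i => this i (Finset.notMem_empty i)]
  · obtain ⟨j, hj⟩ := Finset.card_eq_one.1 hT
    have := hmem hj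
    rw [card_placements_of_eq_zero_of_ne (j := j) fun i hi => this i (by simpa using hi),
      card_placements_of_eq_zero_of_ne (j := j) fun i hi => this i (by simpa using hi)]
    simp [hmn]
  · obtain ⟨j, k, hjk, hjk'⟩ := Finset.card_eq_two.1 hT
    have hz : ∀ i, i ≠ j → i ≠ k → d i = 0 := fun i h₁ h₂ => hmem hjk' i (by simp [h₁, h₂])
    have hnz : ∀ i ∈ ({j, k} : Finset (Fin s)), d i ≠ 0 := fun i hi => by
      rw [← hjk'] at hi
      exact (Finset.mem_filter.1 hi).2
    have hle : ∀ {j k}, j ≠ k → (∀ i, i ≠ j → i ≠ k → d i = 0) → S (d j) (d k) →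
        Nat.card (Placements d (Sum.isLeft : Fin m ⊕ Fin n → Bool)) ≤
          Nat.card (Placements d (Sum.isLeft : Fin m' ⊕ Fin n' → Bool)) := fun hjk hz h => by
      rw [← copyCount_completeBipartiteGraph_mul_card_sizePerms m n hjk hz,
        ← copyCount_completeBipartiteGraph_mul_card_sizePerms m' n' hjk hz]
      exact Nat.mul_le_mul_right _ (hS _ _ h)
    rcases hd j k hjk hz (hnz j (by simp)) (hnz k (by simp)) with h | h
    exacts [hle hjk hz h, hle hjk.symm (fun i h₁ h₂ => hz i h₂ h₁) h]

section Host

variable {ι : Type*} [DecidableEq ι]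

noncomputable def sigmaSplitPair (X : ι → Type*) {i₁ i₂ : ι} (hne : i₁ ≠ i₂) :
    (X i₁ ⊕ X i₂) ⊕ (Σ l : {l // l ≠ i₁ ∧ l ≠ i₂}, X l) ≃ Σ l, X l :=
  Equiv.ofBijective (Sum.elim (Sum.elim (Sigma.mk i₁) (Sigma.mk i₂)) fun x => ⟨x.1.1, x.2⟩) <| by
    constructor
    · rintro ((u | u) | ⟨⟨l, hl⟩, u⟩) ((v | v) | ⟨⟨l', hl'⟩, v⟩) h <;>
        simp only [Sum.elim_inl, Sum.elim_inr] at h <;> cases h <;> tauto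
    · rintro ⟨l, v⟩
      by_cases h₁ : l = i₁
      · subst h₁; exact ⟨.inl (.inl v), rfl⟩
      by_cases h₂ : l = i₂
      · subst h₂; exact ⟨.inl (.inr v), rfl⟩
      exact ⟨.inr ⟨⟨l, h₁, h₂⟩, v⟩, rfl⟩

lemma sigmaSplitPair_apply (X : ι → Type*) {i₁ i₂ : ι} (hne : i₁ ≠ i₂) (x) :
    sigmaSplitPair X hne x =
      Sum.elim (Sum.elim (Sigma.mk i₁) (Sigma.mk i₂)) (fun x => ⟨x.1.1, x.2⟩) x :=
  rfl

theorem card_placements_sigma_eq_sum {r : ℕ} (c : Fin r → ℕ) {i₁ i₂ : Fin r} (hne : i₁ ≠ i₂)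
    (b : Fin s → ℕ) :
    Nat.card (Placements b (Sigma.fst : (Σ l, Fin (c l)) → Fin r)) = ∑ d ∈ Finset.Iic b,
      Nat.card (Placements d (Sum.isLeft : Fin (c i₁) ⊕ Fin (c i₂) → Bool)) *
      Nat.card (Placements (b - d)
        (Sigma.fst : (Σ l : {l // l ≠ i₁ ∧ l ≠ i₂}, Fin (c l)) → _)) := by
  rw [← card_placements_comp_equiv (sigmaSplitPair (fun l => Fin (c l)) hne),
    card_placements_sum]
  · refine Finset.sum_congr rfl fun d _ => ?_
    rw [placements_congr (p' := Sum.isLeft), placements_congr (p' := Sigma.fst)]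
    · exact fun x y => Subtype.ext_iff.symm
    · rintro (x | x) (y | y) <;> simp [sigmaSplitPair_apply, hne, hne.symm]
  · rintro (x | x) ⟨⟨l, hl⟩, y⟩ <;> simp [sigmaSplitPair_apply, hl.1.symm, hl.2.symm]

lemma card_ne_and_ne_add_two {r : ℕ} {i₁ i₂ : Fin r} (hne : i₁ ≠ i₂) :
    Fintype.card {l : Fin r // l ≠ i₁ ∧ l ≠ i₂} + 2 = r := by
  have hcompl : ({l | l ≠ i₁ ∧ l ≠ i₂} : Finset (Fin r)) = {i₁, i₂}ᶜ := by ext; simp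
  rw [Fintype.card_subtype, hcompl, Finset.card_compl, ← Finset.card_pair hne,
    Nat.sub_add_cancel (Finset.card_le_univ _), Fintype.card_fin]

lemma exists_ne_not_of_card_add_two_le {r : ℕ} {P : Fin r → Prop} [DecidablePred P]
    (h : Fintype.card {i // P i} + 2 ≤ r) : ∃ i i', i ≠ i' ∧ ¬P i ∧ ¬P i' := by
  have hcompl : 1 < Fintype.card {i // ¬P i} := by
    rw [Fintype.card_subtype_compl, Fintype.card_fin]
    omega
  obtain ⟨⟨i, hi⟩, ⟨i', hi'⟩, hii'⟩ := Fintype.exists_pair_of_one_lt_card hcompl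
  exact ⟨i, i', fun h => hii' (Subtype.ext h), hi, hi'⟩

end Host

/-- Every trace `d ≤ g` of a pattern with part sizes `g` on two host parts that fills two parts
of the pattern has shape `S`, up to order. -/
def TracesHaveShape {r : ℕ} (S : ℕ → ℕ → Prop) (g : Fin r → ℕ) : Prop :=
  ∀ d ≤ g, ∀ i i', i ≠ i' → d i = g i → d i' = g i' →
    ∀ j k, j ≠ k → (∀ l, l ≠ j → l ≠ k → d l = 0) → d j ≠ 0 → d k ≠ 0 →
      S (d j) (d k) ∨ S (d k) (d j)

lemma copyCount_mul_card_sizePerms_eq_sum {r : ℕ} (c : Fin r → ℕ) {i₁ i₂ : Fin r}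
    (hne : i₁ ≠ i₂) (g : Fin s → ℕ) :
    copyCount (completeMultipartiteGraph fun i => Fin (g i))
        (completeMultipartiteGraph fun l => Fin (c l)) * Nat.card (sizePerms g) =
      ∑ d ∈ Finset.Iic g,
        Nat.card (Placements d (Sum.isLeft : Fin (c i₁) ⊕ Fin (c i₂) → Bool)) *
        Nat.card (Placements (g - d)
          (Sigma.fst : (Σ l : {l // l ≠ i₁ ∧ l ≠ i₂}, Fin (c l)) → _)) :=
  (copyCount_mul_card_sizePerms (q := Sigma.fst) (fun _ _ => Iff.rfl) (fun _ _ => Iff.rfl)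
    fun i => by rw [Fintype.card_congr (Equiv.sigmaSubtype i), Fintype.card_fin]).trans
    (card_placements_sigma_eq_sum c hne g)

lemma exists_ne_eq_of_card_placements_sub_ne_zero [Fintype γ] {r : ℕ} {p : β → γ}
    (hγ : Fintype.card γ + 2 ≤ r) {g d : Fin r → ℕ} (hdg : d ≤ g)
    (h : Nat.card (Placements (g - d) p) ≠ 0) : ∃ i i', i ≠ i' ∧ d i = g i ∧ d i' = g i' := by
  obtain ⟨i, i', hii', hi, hi'⟩ := exists_ne_not_of_card_add_two_le
    ((Nat.add_le_add_right (card_support_le_of_card_placements_ne_zero h) 2).trans hγ)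
  have hfull : ∀ {l}, ¬(g - d) l ≠ 0 → d l = g l := fun {l} h => by
    have h₁ : d l ≤ g l := hdg l
    have h₂ : g l - d l = 0 := not_not.1 h
    omega
  exact ⟨i, i', hii', hfull hi, hfull hi'⟩

theorem copyCount_completeMultipartiteGraph_le {r : ℕ} {c c' : Fin r → ℕ} {i₁ i₂ : Fin r}
    (hne : i₁ ≠ i₂) (hsame : ∀ l, l ≠ i₁ → l ≠ i₂ → c' l = c l)
    (hmove : c' i₁ + c' i₂ = c i₁ + c i₂) (S : ℕ → ℕ → Prop)
    (hS : ∀ x y, S x y →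
      copyCount (completeBipartiteGraph (Fin x) (Fin y))
          (completeBipartiteGraph (Fin (c i₁)) (Fin (c i₂))) ≤
        copyCount (completeBipartiteGraph (Fin x) (Fin y))
          (completeBipartiteGraph (Fin (c' i₁)) (Fin (c' i₂))))
    {g : Fin r → ℕ} (hg : TracesHaveShape S g) :
    copyCount (completeMultipartiteGraph fun i => Fin (g i))
        (completeMultipartiteGraph fun l => Fin (c l)) ≤
      copyCount (completeMultipartiteGraph fun i => Fin (g i))
        (completeMultipartiteGraph fun l => Fin (c' l)) := by
  refine Nat.le_of_mul_le_mul_right ?_ (card_sizePerms_pos g)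
  rw [copyCount_mul_card_sizePerms_eq_sum c hne, copyCount_mul_card_sizePerms_eq_sum c' hne]
  refine Finset.sum_le_sum fun d hd => ?_
  have hrest : (fun l : {l // l ≠ i₁ ∧ l ≠ i₂} => c' l.1) = fun l => c l.1 :=
    funext fun l => hsame l l.2.1 l.2.2
  rw [show Nat.card (Placements (g - d)
      (Sigma.fst : (Σ l : {l // l ≠ i₁ ∧ l ≠ i₂}, Fin (c' l)) → _)) = _ from
    congrArg (fun w : {l // l ≠ i₁ ∧ l ≠ i₂} → ℕ =>
      Nat.card (Placements (g - d) (Sigma.fst : (Σ l, Fin (w l)) → _))) hrest]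
  by_cases h0 : Nat.card (Placements (g - d)
      (Sigma.fst : (Σ l : {l // l ≠ i₁ ∧ l ≠ i₂}, Fin (c l)) → _)) = 0
  · simp [h0]
  obtain ⟨i, i', hii', hi, hi'⟩ := exists_ne_eq_of_card_placements_sub_ne_zero
    (card_ne_and_ne_add_two hne).le (Finset.mem_Iic.1 hd) h0
  exact Nat.mul_le_mul_right _ (card_placements_isLeft_le S (by omega) hS d
    (hg d (Finset.mem_Iic.1 hd) i i' hii' hi hi'))

section Shapes

variable {r : ℕ} {g d : Fin r → ℕ} {j k : Fin r}

lemma eq_or_eq_of_eq_of_ne_zero (hz : ∀ l, l ≠ j → l ≠ k → d l = 0) {l : Fin r}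
    (hl : d l = g l) (hgl : g l ≠ 0) : l = j ∨ l = k := by
  by_contra h
  exact hgl (hl.symm.trans (hz l (fun h' => h (.inl h')) fun h' => h (.inr h')))

lemma eq_and_eq_of_forall_ne_zero (hz : ∀ l, l ≠ j → l ≠ k → d l = 0) {i i' : Fin r}
    (hii' : i ≠ i') (hi : d i = g i) (hi' : d i' = g i') (hg : ∀ l, g l ≠ 0) :
    d j = g j ∧ d k = g k := by
  rcases eq_or_eq_of_eq_of_ne_zero hz hi (hg i) with rfl | rfl <;>
    rcases eq_or_eq_of_eq_of_ne_zero hz hi' (hg i') with rfl | rfl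
  exacts [absurd rfl hii', ⟨hi, hi'⟩, ⟨hi', hi⟩, absurd rfl hii']

lemma eq_or_eq_of_ne_zero_of_ne (hz : ∀ l, l ≠ j → l ≠ k → d l = 0) {i i' : Fin r}
    (hii' : i ≠ i') (hi : d i = g i) (hi' : d i' = g i') {l₀ : Fin r}
    (hg : ∀ l, l ≠ l₀ → g l ≠ 0) : d j = g j ∨ d k = g k := by
  obtain ⟨l, hl, hl₀⟩ : ∃ l, d l = g l ∧ l ≠ l₀ := by
    by_cases h : i = l₀
    · exact ⟨i', hi', fun h' => hii' (h.trans h'.symm)⟩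
    · exact ⟨i, hi, h⟩
  rcases eq_or_eq_of_eq_of_ne_zero hz hl (hg l hl₀) with rfl | rfl
  exacts [Or.inl hl, Or.inr hl]

/-- The shapes `(x, y)` of the traces `K_{x,y}` of `K`, `K'` and `K''` on two host parts. -/
def TraceShape (a x y : ℕ) : Prop :=
  (x, y) = (a, a) ∨ (x, y) = (a - 1, a) ∨ (x, y) = (a - 1, a - 1) ∨ (x, y) = (a - 2, a)

theorem tracesHaveShape_K (a : ℕ) :
    TracesHaveShape (TraceShape a) fun i : Fin r => if (i : ℕ) = 0 then a - 1 else a := by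
  intro d hdg i i' hii' hi hi' j k hjk hz hj hk
  have hle : ∀ l, d l ≤ a := fun l => (hdg l).trans (by dsimp only; split_ifs <;> omega)
  have hjk' : (j : ℕ) ≠ k := Fin.val_ne_of_ne hjk
  simp only [TraceShape, Prod.mk.injEq]
  rcases Nat.lt_or_ge a 2 with ha | ha
  · have := hle j; have := hle k; omega
  obtain ⟨hj', hk'⟩ := eq_and_eq_of_forall_ne_zero (g := fun i : Fin r => if (i : ℕ) = 0 then
    a - 1 else a) hz hii' hi hi' fun l => by split_ifs <;> omega
  split_ifs at hj' hk' <;> omega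

theorem tracesHaveShape_K' (a : ℕ) :
    TracesHaveShape (TraceShape a) fun i : Fin r => if (i : ℕ) = 0 then a - 2 else a := by
  intro d hdg i i' hii' hi hi' j k hjk hz hj hk
  have hle : ∀ l, d l ≤ a := fun l => (hdg l).trans (by dsimp only; split_ifs <;> omega)
  have hjk' : (j : ℕ) ≠ k := Fin.val_ne_of_ne hjk
  simp only [TraceShape, Prod.mk.injEq]
  rcases Nat.lt_or_ge a 2 with ha | ha
  · have := hle j; have := hle k; omega
  rcases Nat.lt_or_ge a 3 with ha' | ha'
  -- for `a = 2` the first part of `K'` is empty, and it may be one of the two full parts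
  · have := hle j; have := hle k
    rcases eq_or_eq_of_ne_zero_of_ne (g := fun i : Fin r => if (i : ℕ) = 0 then a - 2 else a)
      (l₀ := ⟨0, j.pos⟩) hz hii' hi hi' (fun l hl => by
        rw [if_neg fun h => hl (Fin.ext h)]; omega) with h | h <;>
    · split_ifs at h <;> omega
  obtain ⟨hj', hk'⟩ := eq_and_eq_of_forall_ne_zero (g := fun i : Fin r => if (i : ℕ) = 0 then
    a - 2 else a) hz hii' hi hi' fun l => by split_ifs <;> omega
  split_ifs at hj' hk' <;> omega

theorem tracesHaveShape_K'' (a : ℕ) :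
    TracesHaveShape (TraceShape a) fun i : Fin r => if (i : ℕ) ≤ 1 then a - 1 else a := by
  intro d hdg i i' hii' hi hi' j k hjk hz hj hk
  have hle : ∀ l, d l ≤ a := fun l => (hdg l).trans (by dsimp only; split_ifs <;> omega)
  simp only [TraceShape, Prod.mk.injEq]
  rcases Nat.lt_or_ge a 2 with ha | ha
  · have := hle j; have := hle k; omega
  obtain ⟨hj', hk'⟩ := eq_and_eq_of_forall_ne_zero (g := fun i : Fin r => if (i : ℕ) ≤ 1 then
    a - 1 else a) hz hii' hi hi' fun l => by split_ifs <;> omega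
  split_ifs at hj' hk' <;> omega

end Shapes

end Graph

theorem stmt_19_general (r a : ℕ) (c c' : Fin r → ℕ) (i₁ i₂ : Fin r) (hne : i₁ ≠ i₂)
    (hsame : ∀ l, l ≠ i₁ → l ≠ i₂ → c' l = c l)
    (hmove : c' i₁ + c' i₂ = c i₁ + c i₂)
    (hbip : ∀ x y : ℕ,
      ((x, y) = (a, a) ∨ (x, y) = (a - 1, a) ∨ (x, y) = (a - 1, a - 1) ∨
        (x, y) = (a - 2, a)) →
      Graph.copyCount (completeBipartiteGraph (Fin x) (Fin y))
          (completeBipartiteGraph (Fin (c i₁)) (Fin (c i₂))) ≤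
        Graph.copyCount (completeBipartiteGraph (Fin x) (Fin y))
          (completeBipartiteGraph (Fin (c' i₁)) (Fin (c' i₂)))) :
    Graph.copyCount
        (completeMultipartiteGraph (fun i : Fin r => Fin (if (i : ℕ) = 0 then a - 1 else a)))
        (completeMultipartiteGraph (fun l : Fin r => Fin (c l))) ≤
      Graph.copyCount
        (completeMultipartiteGraph (fun i : Fin r => Fin (if (i : ℕ) = 0 then a - 1 else a)))
        (completeMultipartiteGraph (fun l : Fin r => Fin (c' l))) ∧
    Graph.copyCount
        (completeMultipartiteGraph (fun i : Fin r => Fin (if (i : ℕ) = 0 then a - 2 else a)))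
        (completeMultipartiteGraph (fun l : Fin r => Fin (c l))) ≤
      Graph.copyCount
        (completeMultipartiteGraph (fun i : Fin r => Fin (if (i : ℕ) = 0 then a - 2 else a)))
        (completeMultipartiteGraph (fun l : Fin r => Fin (c' l))) ∧
    Graph.copyCount
        (completeMultipartiteGraph (fun i : Fin r => Fin (if (i : ℕ) ≤ 1 then a - 1 else a)))
        (completeMultipartiteGraph (fun l : Fin r => Fin (c l))) ≤
      Graph.copyCount
        (completeMultipartiteGraph (fun i : Fin r => Fin (if (i : ℕ) ≤ 1 then a - 1 else a)))
        (completeMultipartiteGraph (fun l : Fin r => Fin (c' l))) :=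
  have hmono := fun g => Graph.copyCount_completeMultipartiteGraph_le (g := g) hne hsame hmove
    (Graph.TraceShape a) hbip
  ⟨hmono _ (Graph.tracesHaveShape_K a), hmono _ (Graph.tracesHaveShape_K' a),
    hmono _ (Graph.tracesHaveShape_K'' a)⟩

/-- if `T'` is obtained from a complete `r`-partite graph `T` by moving
vertices between two parts so that the number of edges and the numbers of copies of
`K_{a,a}`, `K_{a-1,a}`, `K_{a-1,a-1}`, `K_{a-2,a}` within the union of the two parts do not
decrease, then the numbers of copies of `K_{a-1,a,…,a}`, `K_{a-2,a,…,a}` and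
`K_{a-1,a-1,a,…,a}` do not decrease. -/
theorem stmt_19 (r a : ℕ) (hr : 2 ≤ r) (c c' : Fin r → ℕ) (i₁ i₂ : Fin r) (hne : i₁ ≠ i₂)
    (hsame : ∀ l, l ≠ i₁ → l ≠ i₂ → c' l = c l)
    (hmove : c' i₁ + c' i₂ = c i₁ + c i₂)
    (hedges : (completeMultipartiteGraph (fun l : Fin r => Fin (c l))).edgeSet.ncard ≤
      (completeMultipartiteGraph (fun l : Fin r => Fin (c' l))).edgeSet.ncard)
    (hbip : ∀ x y : ℕ,
      ((x, y) = (a, a) ∨ (x, y) = (a - 1, a) ∨ (x, y) = (a - 1, a - 1) ∨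
        (x, y) = (a - 2, a)) →
      Graph.copyCount (completeBipartiteGraph (Fin x) (Fin y))
          (completeBipartiteGraph (Fin (c i₁)) (Fin (c i₂))) ≤
        Graph.copyCount (completeBipartiteGraph (Fin x) (Fin y))
          (completeBipartiteGraph (Fin (c' i₁)) (Fin (c' i₂)))) :
    Graph.copyCount
        (completeMultipartiteGraph (fun i : Fin r => Fin (if (i : ℕ) = 0 then a - 1 else a)))
        (completeMultipartiteGraph (fun l : Fin r => Fin (c l))) ≤
      Graph.copyCount
        (completeMultipartiteGraph (fun i : Fin r => Fin (if (i : ℕ) = 0 then a - 1 else a)))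
        (completeMultipartiteGraph (fun l : Fin r => Fin (c' l))) ∧
    Graph.copyCount
        (completeMultipartiteGraph (fun i : Fin r => Fin (if (i : ℕ) = 0 then a - 2 else a)))
        (completeMultipartiteGraph (fun l : Fin r => Fin (c l))) ≤
      Graph.copyCount
        (completeMultipartiteGraph (fun i : Fin r => Fin (if (i : ℕ) = 0 then a - 2 else a)))
        (completeMultipartiteGraph (fun l : Fin r => Fin (c' l))) ∧
    Graph.copyCount
        (completeMultipartiteGraph (fun i : Fin r => Fin (if (i : ℕ) ≤ 1 then a - 1 else a)))
        (completeMultipartiteGraph (fun l : Fin r => Fin (c l))) ≤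
      Graph.copyCount
        (completeMultipartiteGraph (fun i : Fin r => Fin (if (i : ℕ) ≤ 1 then a - 1 else a)))
        (completeMultipartiteGraph (fun l : Fin r => Fin (c' l))) :=
  stmt_19_general r a c c' i₁ i₂ hne hsame hmove hbip
end
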